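/- arXiv:2107.09057 — 6 statements merged into one kernel-verified Lean document; each statement's English description precedes it below -/
import Mathlib

section
/- Quantum Wigderson-Wigderson (primary) uncertainty principle, commutative finite-dimensional case: if k > 0 and F is a k-transform, then for every x : Fin n → ℂ one has ‖x‖_{1,d} * ‖F x‖_{1,τ} ≥ k * ‖x‖_∞ * ‖F x‖_∞. -/
open Finset

/-- Weighted `p`-norm on `Fin n → ℂ` with weight `d`. -/
noncomputable def wnorm {n : ℕ} (d : Fin n → ℝ) (p : ℝ) (x : Fin n → ℂ) : ℝ :=
  (∑ i, d i * ‖x i‖ ^ p) ^ (1 / p)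

/-- Sup (infinity) norm on `Fin n → ℂ`. -/
noncomputable def inorm {n : ℕ} (x : Fin n → ℂ) : ℝ :=
  ⨆ i, ‖x i‖

/-- `G` is the adjoint of `F` with respect to the weighted inner products with
weights `d` and `τ`. -/
def IsAdjointPair {n m : ℕ} (d : Fin n → ℝ) (τ : Fin m → ℝ)
    (F : (Fin n → ℂ) →ₗ[ℂ] (Fin m → ℂ)) (G : (Fin m → ℂ) →ₗ[ℂ] (Fin n → ℂ)) : Prop :=
  ∀ (x : Fin n → ℂ) (u : Fin m → ℂ),
    ∑ j, (τ j : ℂ) * (starRingEnd ℂ) (F x j) * u j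
      = ∑ i, (d i : ℂ) * (starRingEnd ℂ) (x i) * G u i

/-!
Testing the adjoint relation against the unit vector `e_i`, whose weighted `1`-norm is `d i`,
turns the bound `‖F x‖_∞ ≤ ‖x‖_{1,d}` into its dual `‖F* u‖_∞ ≤ ‖u‖_{1,τ}`. Hence
`k ‖x‖_∞ ≤ ‖F* F x‖_∞ ≤ ‖F x‖_{1,τ}`, and multiplying by `‖F x‖_∞ ≤ ‖x‖_{1,d}` gives the claim.
-/

@[simp]
lemma wnorm_one_eq_sum {n : ℕ} (d : Fin n → ℝ) (x : Fin n → ℂ) :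
    wnorm d 1 x = ∑ i, d i * ‖x i‖ := by
  simp [wnorm]

lemma wnorm_one_nonneg {n : ℕ} {d : Fin n → ℝ} (hd : ∀ i, 0 ≤ d i) (x : Fin n → ℂ) :
    0 ≤ wnorm d 1 x := by
  rw [wnorm_one_eq_sum]
  exact sum_nonneg fun i _ => mul_nonneg (hd i) (norm_nonneg _)

lemma wnorm_one_single {n : ℕ} (d : Fin n → ℝ) (i : Fin n) :
    wnorm d 1 (Pi.single i 1) = d i := by
  rw [wnorm_one_eq_sum, sum_eq_single i (fun j _ hj => by simp [hj]) (by simp)]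
  simp

lemma inorm_nonneg {n : ℕ} (x : Fin n → ℂ) : 0 ≤ inorm x :=
  Real.iSup_nonneg fun _ => norm_nonneg _

lemma norm_le_inorm {n : ℕ} (x : Fin n → ℂ) (i : Fin n) : ‖x i‖ ≤ inorm x :=
  le_ciSup (f := fun i => ‖x i‖) (Set.finite_range _).bddAbove i

lemma inorm_le {n : ℕ} {x : Fin n → ℂ} {C : ℝ} (hC : 0 ≤ C) (h : ∀ i, ‖x i‖ ≤ C) :
    inorm x ≤ C :=
  Real.iSup_le h hC

lemma norm_weighted_inner_le {m : ℕ} {τ : Fin m → ℝ} (hτ : ∀ j, 0 ≤ τ j)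
    {v : Fin m → ℂ} {C : ℝ} (hv : ∀ j, ‖v j‖ ≤ C) (u : Fin m → ℂ) :
    ‖∑ j, (τ j : ℂ) * starRingEnd ℂ (v j) * u j‖ ≤ C * wnorm τ 1 u := by
  calc ‖∑ j, (τ j : ℂ) * starRingEnd ℂ (v j) * u j‖
      ≤ ∑ j, ‖(τ j : ℂ) * starRingEnd ℂ (v j) * u j‖ := norm_sum_le _ _
    _ ≤ ∑ j, C * (τ j * ‖u j‖) := by
        refine sum_le_sum fun j _ => ?_
        rw [norm_mul, norm_mul, Complex.norm_real, Real.norm_of_nonneg (hτ j),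
          Complex.norm_conj]
        linear_combination mul_le_mul_of_nonneg_right (hv j) (mul_nonneg (hτ j) (norm_nonneg (u j)))
    _ = C * wnorm τ 1 u := by rw [wnorm_one_eq_sum, mul_sum]

namespace IsAdjointPair

variable {n m : ℕ} {d : Fin n → ℝ} {τ : Fin m → ℝ}
  {F : (Fin n → ℂ) →ₗ[ℂ] (Fin m → ℂ)} {G : (Fin m → ℂ) →ₗ[ℂ] (Fin n → ℂ)}

lemma weight_mul_apply (hadj : IsAdjointPair d τ F G) (u : Fin m → ℂ) (i : Fin n) :
    (d i : ℂ) * G u i = ∑ j, (τ j : ℂ) * starRingEnd ℂ (F (Pi.single i 1) j) * u j := by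
  rw [hadj, sum_eq_single i (fun j _ hj => by simp [hj]) (by simp)]
  simp

lemma inorm_le_wnorm_one (hadj : IsAdjointPair d τ F G) (hd : ∀ i, 0 < d i)
    (hτ : ∀ j, 0 ≤ τ j) (hF1 : ∀ x, inorm (F x) ≤ wnorm d 1 x) (u : Fin m → ℂ) :
    inorm (G u) ≤ wnorm τ 1 u := by
  refine inorm_le (wnorm_one_nonneg hτ u) fun i => ?_
  have hFe : ∀ j, ‖F (Pi.single i 1) j‖ ≤ d i := fun j =>
    (norm_le_inorm _ j).trans ((hF1 _).trans (wnorm_one_single d i).le)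
  have h : d i * ‖G u i‖ ≤ d i * wnorm τ 1 u := by
    calc d i * ‖G u i‖ = ‖(d i : ℂ) * G u i‖ := by
          rw [norm_mul, Complex.norm_real, Real.norm_of_nonneg (hd i).le]
      _ ≤ d i * wnorm τ 1 u := by
          rw [hadj.weight_mul_apply]
          exact norm_weighted_inner_le hτ hFe u
  exact le_of_mul_le_mul_left h (hd i)

end IsAdjointPair

theorem quantum_WW_primary_uncertainty_general {n m : ℕ}
    (d : Fin n → ℝ) (τ : Fin m → ℝ) (hd : ∀ i, 0 < d i) (hτ : ∀ j, 0 < τ j)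
    (k : ℝ)
    (F : (Fin n → ℂ) →ₗ[ℂ] (Fin m → ℂ)) (G : (Fin m → ℂ) →ₗ[ℂ] (Fin n → ℂ))
    (hadj : IsAdjointPair d τ F G)
    (hF1 : ∀ x, inorm (F x) ≤ wnorm d 1 x)
    (hFk : ∀ x, k * inorm x ≤ inorm (G (F x)))
    (x : Fin n → ℂ) :
    wnorm d 1 x * wnorm τ 1 (F x) ≥ k * inorm x * inorm (F x) := by
  have hτ' : ∀ j, 0 ≤ τ j := fun j => (hτ j).le
  have hkey : k * inorm x ≤ wnorm τ 1 (F x) :=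
    (hFk x).trans (hadj.inorm_le_wnorm_one hd hτ' hF1 (F x))
  rw [ge_iff_le, mul_comm (wnorm d 1 x)]
  exact mul_le_mul hkey (hF1 x) (inorm_nonneg _) (wnorm_one_nonneg hτ' _)

/-- Quantum Wigderson-Wigderson (primary) uncertainty principle,
commutative finite-dimensional case. -/
theorem quantum_WW_primary_uncertainty {n m : ℕ} (hn : 0 < n) (hm : 0 < m)
    (d : Fin n → ℝ) (τ : Fin m → ℝ) (hd : ∀ i, 0 < d i) (hτ : ∀ j, 0 < τ j)
    (k : ℝ) (hk : 0 < k)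
    (F : (Fin n → ℂ) →ₗ[ℂ] (Fin m → ℂ)) (G : (Fin m → ℂ) →ₗ[ℂ] (Fin n → ℂ))
    (hadj : IsAdjointPair d τ F G)
    (hF1 : ∀ x, inorm (F x) ≤ wnorm d 1 x)
    (hFk : ∀ x, k * inorm x ≤ inorm (G (F x)))
    (x : Fin n → ℂ) :
    wnorm d 1 x * wnorm τ 1 (F x) ≥ k * inorm x * inorm (F x) :=
  quantum_WW_primary_uncertainty_general d τ hd hτ k F G hadj hF1 hFk x
end

section
/- Quantum L² smooth support uncertainty principle, commutative finite-dimensional case: if k > 0, F is a k-transform, and moreover F* ∘ F = k • id on Fin n → ℂ, then for every nonzero x : Fin n → ℂ and all ε, η ∈ [0,1] with ε + η ≤ 1, S_ε^{2,d}(x) * S_η^{2,τ}(F x) ≥ k * (1 − ε − η)². -/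
open Finset

/-- The `(p, ε)` smooth support of `x` with respect to the weight `d`. -/
noncomputable def smoothSupp {n : ℕ} (d : Fin n → ℝ) (p ε : ℝ) (x : Fin n → ℂ) : ℝ :=
  sInf { s : ℝ | ∃ h : Fin n → ℝ, (∀ i, 0 ≤ h i) ∧ (∀ i, h i ≤ 1) ∧
    wnorm d p (fun i => ((1 - h i : ℝ) : ℂ) * x i) ≤ ε * wnorm d p x ∧
    s = ∑ i, if x i = 0 then 0 else d i * h i }

/-!
Write `x = h • x + (1 - h) • x`. Since `F* F = k`, the map `F` scales the weighted L² norms by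
`√k`, so the two residual bounds leave `g • F (h • x)` with L² norm at least
`(1 - ε - η) √k ‖x‖₂`. On the other hand `‖F (h • x)‖_∞ ≤ ‖h • x‖₁ ≤ (∑ d h)^(1/2) ‖x‖₂` by
Cauchy–Schwarz, so the square of that norm is at most `(∑ τ g) (∑ d h) ‖x‖₂²`. Cutting `h` and
`g` down to the supports of `x` and `F x` leaves the residuals unchanged, which turns these sums
into the smooth-support costs.
-/

section WeightedNorm

variable {n : ℕ} {d : Fin n → ℝ} {p : ℝ}

lemma wnorm_nonneg (hd : ∀ i, 0 ≤ d i) (x : Fin n → ℂ) : 0 ≤ wnorm d p x :=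
  Real.rpow_nonneg (sum_nonneg fun i _ => mul_nonneg (hd i) (by positivity)) _

lemma wnorm_zero (hp : p ≠ 0) : wnorm d p 0 = 0 := by
  simp [wnorm, Real.zero_rpow hp, Real.zero_rpow (inv_ne_zero hp)]

lemma wnorm_pos (hd : ∀ i, 0 < d i) {x : Fin n → ℂ} (hx : x ≠ 0) :
    0 < wnorm d p x := by
  obtain ⟨i, hi⟩ := Function.ne_iff.mp hx
  refine Real.rpow_pos_of_pos
    (sum_pos' (fun j _ => by have := hd j; positivity) ⟨i, mem_univ i, ?_⟩) _
  exact mul_pos (hd i) (Real.rpow_pos_of_pos (norm_pos_iff.mpr hi) p)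

lemma wnorm_one_eq (d : Fin n → ℝ) (x : Fin n → ℂ) : wnorm d 1 x = ∑ i, d i * ‖x i‖ := by
  simp [wnorm]

lemma wnorm_two_eq_sqrt (d : Fin n → ℝ) (x : Fin n → ℂ) :
    wnorm d 2 x = √(∑ i, d i * ‖x i‖ ^ 2) := by
  simp [wnorm, Real.sqrt_eq_rpow]

lemma wnorm_two_sq (hd : ∀ i, 0 ≤ d i) (x : Fin n → ℂ) :
    wnorm d 2 x ^ 2 = ∑ i, d i * ‖x i‖ ^ 2 := by
  rw [wnorm_two_eq_sqrt, Real.sq_sqrt (sum_nonneg fun i _ => by have := hd i; positivity)]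

lemma wnorm_le_wnorm (hd : ∀ i, 0 ≤ d i) (hp : 0 ≤ p) {x y : Fin n → ℂ}
    (hxy : ∀ i, ‖x i‖ ≤ ‖y i‖) : wnorm d p x ≤ wnorm d p y := by
  unfold wnorm
  gcongr with i
  · exact sum_nonneg fun i _ => mul_nonneg (hd i) (by positivity)
  · exact hd i
  · exact hxy i

lemma wnorm_mul_le (hd : ∀ i, 0 ≤ d i) (hp : 0 ≤ p) {g : Fin n → ℝ} (g0 : ∀ i, 0 ≤ g i)
    (g1 : ∀ i, g i ≤ 1) (x : Fin n → ℂ) : wnorm d p (fun i => (g i : ℂ) * x i) ≤ wnorm d p x :=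
  wnorm_le_wnorm hd hp fun i => by
    rw [norm_mul, Complex.norm_of_nonneg (g0 i)]
    exact mul_le_of_le_one_left (norm_nonneg _) (g1 i)

/-- Reduces to the unweighted Minkowski inequality for `i ↦ d i ^ (1 / p) * ‖x i‖`. -/
lemma wnorm_add_le (hd : ∀ i, 0 ≤ d i) (hp : 1 ≤ p) (x y : Fin n → ℂ) :
    wnorm d p (x + y) ≤ wnorm d p x + wnorm d p y := by
  have hp0 : p ≠ 0 := by positivity
  have hweight : ∀ (i : Fin n) (a : ℝ), 0 ≤ a → d i * a ^ p = (d i ^ (1 / p) * a) ^ p := by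
    intro i a ha
    rw [Real.mul_rpow (by have := hd i; positivity) ha, one_div, Real.rpow_inv_rpow (hd i) hp0]
  have hmono : wnorm d p (x + y) ≤
      (∑ i, (d i ^ (1 / p) * ‖x i‖ + d i ^ (1 / p) * ‖y i‖) ^ p) ^ (1 / p) := by
    unfold wnorm
    gcongr with i
    · exact sum_nonneg fun i _ => mul_nonneg (hd i) (by positivity)
    · have hdi : 0 ≤ d i ^ (1 / p) := Real.rpow_nonneg (hd i) _
      rw [hweight i _ (norm_nonneg _), ← mul_add]
      exact Real.rpow_le_rpow (by positivity)
        (mul_le_mul_of_nonneg_left (norm_add_le (x i) (y i)) hdi) (by positivity)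
  refine hmono.trans ?_
  unfold wnorm
  simp only [hweight _ _ (norm_nonneg _)]
  have hterm : ∀ z : Fin n → ℂ, ∀ i ∈ univ, 0 ≤ d i ^ (1 / p) * ‖z i‖ :=
    fun z i _ => mul_nonneg (Real.rpow_nonneg (hd i) _) (norm_nonneg _)
  exact Real.Lp_add_le_of_nonneg univ hp (hterm x) (hterm y)

end WeightedNorm

lemma norm_apply_le_inorm {m : ℕ} (y : Fin m → ℂ) (j : Fin m) : ‖y j‖ ≤ inorm y :=
  le_ciSup (f := fun j => ‖y j‖) (Set.finite_range _).bddAbove j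

lemma wnorm_two_mul_sq_le {m : ℕ} {τ : Fin m → ℝ} (hτ : ∀ j, 0 ≤ τ j) {g : Fin m → ℝ}
    (g0 : ∀ j, 0 ≤ g j) (g1 : ∀ j, g j ≤ 1) {y : Fin m → ℂ} {M : ℝ} (hy : ∀ j, ‖y j‖ ≤ M) :
    wnorm τ 2 (fun j => (g j : ℂ) * y j) ^ 2 ≤ (∑ j, τ j * g j) * M ^ 2 := by
  rw [wnorm_two_sq hτ, sum_mul]
  refine sum_le_sum fun j _ => ?_
  rw [norm_mul, Complex.norm_of_nonneg (g0 j), mul_pow, mul_assoc]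
  have hg : g j ^ 2 ≤ g j := by nlinarith [g0 j, g1 j]
  exact mul_le_mul_of_nonneg_left
    (mul_le_mul hg (pow_le_pow_left₀ (norm_nonneg _) (hy j) 2) (sq_nonneg _) (g0 j)) (hτ j)

/-- Cauchy–Schwarz, using `h i ^ 2 ≤ h i`. -/
lemma wnorm_one_mul_sq_le {n : ℕ} {d : Fin n → ℝ} (hd : ∀ i, 0 ≤ d i) {h : Fin n → ℝ}
    (h0 : ∀ i, 0 ≤ h i) (h1 : ∀ i, h i ≤ 1) (x : Fin n → ℂ) :
    wnorm d 1 (fun i => (h i : ℂ) * x i) ^ 2 ≤ (∑ i, d i * h i) * wnorm d 2 x ^ 2 := by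
  rw [wnorm_one_eq, wnorm_two_sq hd]
  refine sum_sq_le_sum_mul_sum_of_sq_le_mul univ (fun i _ => mul_nonneg (hd i) (h0 i))
    (fun i _ => mul_nonneg (hd i) (sq_nonneg _)) fun i _ => ?_
  rw [norm_mul, Complex.norm_of_nonneg (h0 i)]
  have hsq : h i ^ 2 ≤ h i := by nlinarith [h0 i, h1 i]
  calc (d i * (h i * ‖x i‖)) ^ 2 = h i ^ 2 * (d i ^ 2 * ‖x i‖ ^ 2) := by ring
    _ ≤ h i * (d i ^ 2 * ‖x i‖ ^ 2) := by gcongr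
    _ = d i * h i * (d i * ‖x i‖ ^ 2) := by ring

section SmoothSupport

variable {n : ℕ} {d : Fin n → ℝ} {p ε : ℝ} {x : Fin n → ℂ} {h : Fin n → ℝ}

def IsSmoothSuppWeight (d : Fin n → ℝ) (p ε : ℝ) (x : Fin n → ℂ) (h : Fin n → ℝ) : Prop :=
  (∀ i, 0 ≤ h i) ∧ (∀ i, h i ≤ 1) ∧ wnorm d p (fun i => ((1 - h i : ℝ) : ℂ) * x i) ≤ ε * wnorm d p x

lemma isSmoothSuppWeight_one (hd : ∀ i, 0 ≤ d i) (hp : p ≠ 0) (hε : 0 ≤ ε) :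
    IsSmoothSuppWeight d p ε x 1 := by
  refine ⟨fun _ => zero_le_one, fun _ => le_rfl, ?_⟩
  simp only [Pi.one_apply, sub_self, Complex.ofReal_zero, zero_mul]
  rw [← Pi.zero_def, wnorm_zero hp]
  exact mul_nonneg hε (wnorm_nonneg hd x)

lemma IsSmoothSuppWeight.restrict (hh : IsSmoothSuppWeight d p ε x h) :
    IsSmoothSuppWeight d p ε x (fun i => if x i = 0 then 0 else h i) := by
  obtain ⟨h0, h1, hres⟩ := hh
  refine ⟨fun i => ?_, fun i => ?_, ?_⟩
  · dsimp only
    split_ifs <;> simp [h0 i]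
  · dsimp only
    split_ifs <;> simp [h1 i]
  · convert hres using 3 with i
    dsimp only
    split_ifs with hi <;> simp [hi]

end SmoothSupport

open Pointwise in
lemma le_sInf_mul_sInf {A B : Set ℝ} {c : ℝ} (hA : A.Nonempty) (hB : B.Nonempty)
    (hA0 : ∀ a ∈ A, 0 ≤ a) (hB0 : ∀ b ∈ B, 0 ≤ b) (h : ∀ a ∈ A, ∀ b ∈ B, c ≤ a * b) :
    c ≤ sInf A * sInf B := by
  have le_mul_sInf : ∀ a ∈ A, c ≤ a * sInf B := fun a ha => by
    rw [← smul_eq_mul, ← Real.sInf_smul_of_nonneg (hA0 a ha)]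
    exact le_csInf hB.smul_set fun _ ⟨b, hb, hab⟩ => hab ▸ h a ha b hb
  rw [mul_comm, ← smul_eq_mul, ← Real.sInf_smul_of_nonneg (Real.sInf_nonneg hB0)]
  exact le_csInf hA.smul_set fun _ ⟨a, ha, hab⟩ =>
    hab ▸ (le_mul_sInf a ha).trans_eq (mul_comm _ _)

section Transform

variable {n m : ℕ} {d : Fin n → ℝ} {τ : Fin m → ℝ}

lemma IsAdjointPair.sum_mul_norm_sq_apply {F : (Fin n → ℂ) →ₗ[ℂ] (Fin m → ℂ)}
    {G : (Fin m → ℂ) →ₗ[ℂ] (Fin n → ℂ)} {k : ℝ} (hadj : IsAdjointPair d τ F G)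
    (hiso : ∀ y, G (F y) = (k : ℂ) • y) (v : Fin n → ℂ) :
    ∑ j, τ j * ‖F v j‖ ^ 2 = k * ∑ i, d i * ‖v i‖ ^ 2 := by
  have h := hadj v (F v)
  simp only [hiso, Pi.smul_apply, smul_eq_mul, mul_assoc, Complex.conj_mul'] at h
  apply Complex.ofReal_injective
  push_cast
  rw [h, mul_sum]
  exact sum_congr rfl fun i _ => by rw [← Complex.conj_mul']; ring

lemma IsAdjointPair.wnorm_two_apply {F : (Fin n → ℂ) →ₗ[ℂ] (Fin m → ℂ)}
    {G : (Fin m → ℂ) →ₗ[ℂ] (Fin n → ℂ)} {k : ℝ} (hd : ∀ i, 0 ≤ d i)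
    (hadj : IsAdjointPair d τ F G) (hiso : ∀ y, G (F y) = (k : ℂ) • y) (v : Fin n → ℂ) :
    wnorm τ 2 (F v) = √k * wnorm d 2 v := by
  rw [wnorm_two_eq_sqrt, wnorm_two_eq_sqrt, hadj.sum_mul_norm_sq_apply hiso,
    Real.sqrt_mul' _ (sum_nonneg fun i _ => by have := hd i; positivity)]

variable {c ε η : ℝ} {F : (Fin n → ℂ) →ₗ[ℂ] (Fin m → ℂ)} {x : Fin n → ℂ} {h : Fin n → ℝ}
  {g : Fin m → ℝ}

lemma one_sub_sub_mul_wnorm_le_wnorm_mul_apply (hτ : ∀ j, 0 ≤ τ j) (hc : 0 ≤ c)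
    (hF : ∀ v, wnorm τ 2 (F v) = c * wnorm d 2 v) (g0 : ∀ j, 0 ≤ g j) (g1 : ∀ j, g j ≤ 1)
    (hx : wnorm d 2 (fun i => ((1 - h i : ℝ) : ℂ) * x i) ≤ ε * wnorm d 2 x)
    (hFx : wnorm τ 2 (fun j => ((1 - g j : ℝ) : ℂ) * F x j) ≤ η * wnorm τ 2 (F x)) :
    (1 - ε - η) * wnorm τ 2 (F x) ≤
      wnorm τ 2 (fun j => (g j : ℂ) * F (fun i => (h i : ℂ) * x i) j) := by
  set a := F (fun i => (h i : ℂ) * x i)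
  set b := F (fun i => ((1 - h i : ℝ) : ℂ) * x i)
  have hab : F x = a + b := by
    rw [← map_add]
    congr 1
    funext i
    rw [Pi.add_apply]
    push_cast
    ring
  have hFx_le : wnorm τ 2 (F x) ≤ wnorm τ 2 (fun j => (g j : ℂ) * F x j) +
      wnorm τ 2 (fun j => ((1 - g j : ℝ) : ℂ) * F x j) := by
    convert wnorm_add_le hτ one_le_two _ _ using 2
    funext j
    rw [Pi.add_apply]
    push_cast
    ring
  have hga_le : wnorm τ 2 (fun j => (g j : ℂ) * F x j) ≤
      wnorm τ 2 (fun j => (g j : ℂ) * a j) + wnorm τ 2 (fun j => (g j : ℂ) * b j) := by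
    convert wnorm_add_le hτ one_le_two _ _ using 2
    funext j
    rw [hab, Pi.add_apply, Pi.add_apply, mul_add]
  have hgb_le : wnorm τ 2 (fun j => (g j : ℂ) * b j) ≤ ε * wnorm τ 2 (F x) := calc
    _ ≤ wnorm τ 2 b := wnorm_mul_le hτ zero_le_two g0 g1 b
    _ = c * wnorm d 2 (fun i => ((1 - h i : ℝ) : ℂ) * x i) := hF _
    _ ≤ c * (ε * wnorm d 2 x) := mul_le_mul_of_nonneg_left hx hc
    _ = ε * wnorm τ 2 (F x) := by rw [hF]; ring
  linarith

theorem sq_mul_one_sub_sub_sq_le_sum_mul_sum (hd : ∀ i, 0 ≤ d i) (hτ : ∀ j, 0 ≤ τ j)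
    (hc : 0 ≤ c) (hF : ∀ v, wnorm τ 2 (F v) = c * wnorm d 2 v)
    (hF1 : ∀ v, inorm (F v) ≤ wnorm d 1 v) (hx_pos : 0 < wnorm d 2 x)
    (hh : IsSmoothSuppWeight d 2 ε x h) (hg : IsSmoothSuppWeight τ 2 η (F x) g)
    (hεη : ε + η ≤ 1) :
    c ^ 2 * (1 - ε - η) ^ 2 ≤ (∑ i, d i * h i) * ∑ j, τ j * g j := by
  obtain ⟨h0, h1, hx⟩ := hh
  obtain ⟨g0, g1, hFx⟩ := hg
  set W := wnorm τ 2 (fun j => (g j : ℂ) * F (fun i => (h i : ℂ) * x i) j)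
  have lower : (1 - ε - η) * (c * wnorm d 2 x) ≤ W := by
    rw [← hF]
    exact one_sub_sub_mul_wnorm_le_wnorm_mul_apply hτ hc hF g0 g1 hx hFx
  have upper : W ^ 2 ≤ (∑ j, τ j * g j) * ((∑ i, d i * h i) * wnorm d 2 x ^ 2) :=
    (wnorm_two_mul_sq_le hτ g0 g1 fun j => (norm_apply_le_inorm _ j).trans (hF1 _)).trans
      (mul_le_mul_of_nonneg_left (wnorm_one_mul_sq_le hd h0 h1 x)
        (sum_nonneg fun j _ => mul_nonneg (hτ j) (g0 j)))
  have lower_sq := pow_le_pow_left₀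
    (mul_nonneg (sub_nonneg.mpr (by linarith)) (mul_nonneg hc hx_pos.le)) lower 2
  refine le_of_mul_le_mul_right ?_ (pow_pos hx_pos 2)
  nlinarith

end Transform

lemma le_smoothSupp_mul_smoothSupp {n m : ℕ} {d : Fin n → ℝ} {τ : Fin m → ℝ} {p q ε η C : ℝ}
    {x : Fin n → ℂ} {y : Fin m → ℂ} (hd : ∀ i, 0 ≤ d i) (hτ : ∀ j, 0 ≤ τ j) (hp : p ≠ 0)
    (hq : q ≠ 0) (hε : 0 ≤ ε) (hη : 0 ≤ η)
    (hC : ∀ h g, IsSmoothSuppWeight d p ε x h → IsSmoothSuppWeight τ q η y g →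
      C ≤ (∑ i, d i * h i) * ∑ j, τ j * g j) :
    C ≤ smoothSupp d p ε x * smoothSupp τ q η y := by
  have cost_eq : ∀ {k : ℕ} (w : Fin k → ℝ) (z : Fin k → ℂ) (h : Fin k → ℝ),
      (∑ i, if z i = 0 then 0 else w i * h i) = ∑ i, w i * if z i = 0 then 0 else h i := by
    simp [mul_ite]
  have cost_nonneg : ∀ {k : ℕ} {w : Fin k → ℝ} (z : Fin k → ℂ) {h : Fin k → ℝ},
      (∀ i, 0 ≤ w i) → (∀ i, 0 ≤ h i) → 0 ≤ ∑ i, if z i = 0 then 0 else w i * h i := by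
    intro k w z h hw h0
    exact sum_nonneg fun i _ => by
      split_ifs
      exacts [le_rfl, mul_nonneg (hw i) (h0 i)]
  obtain ⟨h0, h1, hres⟩ := isSmoothSuppWeight_one (x := x) hd hp hε
  obtain ⟨g0, g1, gres⟩ := isSmoothSuppWeight_one (x := y) hτ hq hη
  refine le_sInf_mul_sInf ⟨_, 1, h0, h1, hres, rfl⟩ ⟨_, 1, g0, g1, gres, rfl⟩
    (by rintro _ ⟨h, h0, -, -, rfl⟩; exact cost_nonneg x hd h0)
    (by rintro _ ⟨g, g0, -, -, rfl⟩; exact cost_nonneg y hτ g0) ?_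
  rintro _ ⟨h, h0, h1, hres, rfl⟩ _ ⟨g, g0, g1, gres, rfl⟩
  rw [cost_eq, cost_eq]
  exact hC _ _ (IsSmoothSuppWeight.restrict ⟨h0, h1, hres⟩)
    (IsSmoothSuppWeight.restrict ⟨g0, g1, gres⟩)

theorem quantum_L2_smooth_support_uncertainty_general {n m : ℕ}
    (d : Fin n → ℝ) (τ : Fin m → ℝ) (hd : ∀ i, 0 < d i) (hτ : ∀ j, 0 < τ j)
    (k : ℝ) (hk : 0 < k)
    (F : (Fin n → ℂ) →ₗ[ℂ] (Fin m → ℂ)) (G : (Fin m → ℂ) →ₗ[ℂ] (Fin n → ℂ))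
    (hadj : IsAdjointPair d τ F G)
    (hF1 : ∀ x, inorm (F x) ≤ wnorm d 1 x)
    (hiso : ∀ y, G (F y) = (k : ℂ) • y)
    (x : Fin n → ℂ) (hx : x ≠ 0)
    (ε η : ℝ) (hε : ε ∈ Set.Icc (0:ℝ) 1) (hη : η ∈ Set.Icc (0:ℝ) 1)
    (hεη : ε + η ≤ 1) :
    smoothSupp d 2 ε x * smoothSupp τ 2 η (F x) ≥ k * (1 - ε - η) ^ 2 := by
  have hd0 : ∀ i, 0 ≤ d i := fun i => (hd i).le
  have hτ0 : ∀ j, 0 ≤ τ j := fun j => (hτ j).le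
  refine le_smoothSupp_mul_smoothSupp hd0 hτ0 two_ne_zero two_ne_zero hε.1 hη.1
    fun h g hh hg => ?_
  have := sq_mul_one_sub_sub_sq_le_sum_mul_sum hd0 hτ0 (Real.sqrt_nonneg k)
    (hadj.wnorm_two_apply hd0 hiso) hF1 (wnorm_pos hd hx) hh hg hεη
  rwa [Real.sq_sqrt hk.le] at this

/-- Quantum L² smooth support uncertainty principle, commutative finite-dimensional case. -/
theorem quantum_L2_smooth_support_uncertainty {n m : ℕ} (hn : 0 < n) (hm : 0 < m)
    (d : Fin n → ℝ) (τ : Fin m → ℝ) (hd : ∀ i, 0 < d i) (hτ : ∀ j, 0 < τ j)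
    (k : ℝ) (hk : 0 < k)
    (F : (Fin n → ℂ) →ₗ[ℂ] (Fin m → ℂ)) (G : (Fin m → ℂ) →ₗ[ℂ] (Fin n → ℂ))
    (hadj : IsAdjointPair d τ F G)
    (hF1 : ∀ x, inorm (F x) ≤ wnorm d 1 x)
    (hFk : ∀ x, k * inorm x ≤ inorm (G (F x)))
    (hiso : ∀ y, G (F y) = (k : ℂ) • y)
    (x : Fin n → ℂ) (hx : x ≠ 0)
    (ε η : ℝ) (hε : ε ∈ Set.Icc (0:ℝ) 1) (hη : η ∈ Set.Icc (0:ℝ) 1)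
    (hεη : ε + η ≤ 1) :
    smoothSupp d 2 ε x * smoothSupp τ 2 η (F x) ≥ k * (1 - ε - η) ^ 2 :=
  quantum_L2_smooth_support_uncertainty_general d τ hd hτ k hk F G hadj hF1 hiso x hx ε η hε hη hεη
end

section
/- Continuity of the smooth support in ε, commutative finite-dimensional case: for every nonzero x : Fin n → ℂ, every real 1 ≤ p < ∞, every ε ∈ [0,1] and every c with 0 < c < 1, one has S_ε^{p,d}(x) ≤ S_{cε}^{p,d}(x) ≤ (1 − c) * S_d(x) + c * S_ε^{p,d}(x). In particular S_{cε}^{p,d}(x) → S_ε^{p,d}(x) as c → 1⁻. -/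
open Finset

/-- Weighted support of `x`: sum of the weights over the set where `x` is nonzero. -/
noncomputable def wsupp {n : ℕ} (d : Fin n → ℝ) (x : Fin n → ℂ) : ℝ :=
  ∑ i, if x i = 0 then 0 else d i

/-!
If `h` is admissible for `ε`, then the convex combination `h' = c • h + (1 - c) • 1` is admissible
for `c * ε`: indeed `1 - h' = c * (1 - h)` and the weighted norm is homogeneous. Its cost is
`(1 - c) * wsupp d x + c * cost h`, which gives the upper bound; the lower bound is monotonicity
of the smooth support in `ε`, and the limit follows by squeezing.
-/

section WeightedNorm

variable {n : ℕ} {d : Fin n → ℝ} {p : ℝ}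

lemma wnorm_ofReal_mul (hd : ∀ i, 0 ≤ d i) (hp : p ≠ 0) {c : ℝ} (hc : 0 ≤ c) (y : Fin n → ℂ) :
    wnorm d p (fun i => (c : ℂ) * y i) = c * wnorm d p y := by
  have hterm : ∀ i, d i * ‖(c : ℂ) * y i‖ ^ p = c ^ p * (d i * ‖y i‖ ^ p) := fun i => by
    rw [norm_mul, Complex.norm_real, Real.norm_of_nonneg hc, Real.mul_rpow hc (norm_nonneg _)]
    ring
  have hsum : 0 ≤ ∑ i, d i * ‖y i‖ ^ p :=
    sum_nonneg fun i _ => mul_nonneg (hd i) (Real.rpow_nonneg (norm_nonneg _) p)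
  simp only [wnorm, hterm, ← mul_sum]
  rw [Real.mul_rpow (Real.rpow_nonneg hc p) hsum, ← Real.rpow_mul hc, mul_one_div_cancel hp,
    Real.rpow_one]

end WeightedNorm

section SmoothSupport

variable {n : ℕ} {d : Fin n → ℝ} {p : ℝ} {x : Fin n → ℂ}

def smoothSuppSet (d : Fin n → ℝ) (p ε : ℝ) (x : Fin n → ℂ) : Set ℝ :=
  { s : ℝ | ∃ h : Fin n → ℝ, (∀ i, 0 ≤ h i) ∧ (∀ i, h i ≤ 1) ∧
    wnorm d p (fun i => ((1 - h i : ℝ) : ℂ) * x i) ≤ ε * wnorm d p x ∧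
    s = ∑ i, if x i = 0 then 0 else d i * h i }

lemma smoothSupp_eq_sInf (ε : ℝ) : smoothSupp d p ε x = sInf (smoothSuppSet d p ε x) := rfl

lemma bddBelow_smoothSuppSet (hd : ∀ i, 0 ≤ d i) (ε : ℝ) : BddBelow (smoothSuppSet d p ε x) := by
  refine ⟨0, ?_⟩
  rintro _ ⟨h, h0, -, -, rfl⟩
  exact sum_nonneg fun i _ => by split_ifs; exacts [le_rfl, mul_nonneg (hd i) (h0 i)]

lemma wsupp_mem_smoothSuppSet (hd : ∀ i, 0 ≤ d i) (hp : p ≠ 0) {ε : ℝ} (hε : 0 ≤ ε) :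
    wsupp d x ∈ smoothSuppSet d p ε x := by
  refine ⟨fun _ => 1, fun _ => zero_le_one, fun _ => le_rfl, ?_, by simp [wsupp]⟩
  have hzero : (fun i => ((1 - 1 : ℝ) : ℂ) * x i) = 0 := by ext; simp
  rw [hzero, wnorm_zero hp]
  exact mul_nonneg hε (wnorm_nonneg hd x)

lemma smoothSuppSet_mono (hd : ∀ i, 0 ≤ d i) {ε δ : ℝ} (hεδ : ε ≤ δ) :
    smoothSuppSet d p ε x ⊆ smoothSuppSet d p δ x := by
  rintro s ⟨h, h0, h1, hw, rfl⟩
  exact ⟨h, h0, h1, hw.trans (mul_le_mul_of_nonneg_right hεδ (wnorm_nonneg hd x)), rfl⟩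

lemma smoothSupp_antitone (hd : ∀ i, 0 ≤ d i) (hp : p ≠ 0) {ε δ : ℝ} (hε : 0 ≤ ε) (hεδ : ε ≤ δ) :
    smoothSupp d p δ x ≤ smoothSupp d p ε x :=
  csInf_le_csInf (bddBelow_smoothSuppSet hd δ) ⟨_, wsupp_mem_smoothSuppSet hd hp hε⟩
    (smoothSuppSet_mono hd hεδ)

lemma affine_mem_smoothSuppSet (hd : ∀ i, 0 ≤ d i) (hp : p ≠ 0) {ε c s : ℝ} (hc0 : 0 ≤ c)
    (hc1 : c ≤ 1) (hs : s ∈ smoothSuppSet d p ε x) :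
    (1 - c) * wsupp d x + c * s ∈ smoothSuppSet d p (c * ε) x := by
  obtain ⟨h, h0, h1, hw, rfl⟩ := hs
  refine ⟨fun i => 1 - c * (1 - h i), fun i => ?_, fun i => ?_, ?_, ?_⟩
  · nlinarith [h0 i, h1 i]
  · nlinarith [h1 i]
  · have hscale : (fun i => ((1 - (1 - c * (1 - h i)) : ℝ) : ℂ) * x i)
        = fun i => (c : ℂ) * (((1 - h i : ℝ) : ℂ) * x i) := by
      ext i; push_cast; ring
    rw [hscale, wnorm_ofReal_mul hd hp hc0, mul_assoc]
    exact mul_le_mul_of_nonneg_left hw hc0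
  · rw [wsupp, mul_sum, mul_sum, ← sum_add_distrib]
    refine sum_congr rfl fun i _ => ?_
    split_ifs <;> ring

open scoped Pointwise in
lemma smoothSupp_mul_le (hd : ∀ i, 0 ≤ d i) (hp : p ≠ 0) {ε c : ℝ} (hε : 0 ≤ ε) (hc0 : 0 ≤ c)
    (hc1 : c ≤ 1) :
    smoothSupp d p (c * ε) x ≤ (1 - c) * wsupp d x + c * smoothSupp d p ε x := by
  rw [smoothSupp_eq_sInf ε, ← smul_eq_mul c (sInf _), ← Real.sInf_smul_of_nonneg hc0,
    ← sub_le_iff_le_add']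
  refine le_csInf ((Set.nonempty_of_mem (wsupp_mem_smoothSuppSet hd hp hε)).smul_set) ?_
  rintro _ ⟨s, hs, rfl⟩
  rw [sub_le_iff_le_add']
  exact csInf_le (bddBelow_smoothSuppSet hd _) (affine_mem_smoothSuppSet hd hp hc0 hc1 hs)

end SmoothSupport

theorem smooth_support_continuity_general {n : ℕ}
    (d : Fin n → ℝ) (hd : ∀ i, 0 < d i)
    (x : Fin n → ℂ) (p ε : ℝ) (hp : 1 ≤ p) (hε : ε ∈ Set.Icc (0:ℝ) 1) :
    (∀ c : ℝ, 0 < c → c < 1 →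
      smoothSupp d p ε x ≤ smoothSupp d p (c * ε) x ∧
      smoothSupp d p (c * ε) x ≤ (1 - c) * wsupp d x + c * smoothSupp d p ε x) ∧
    Filter.Tendsto (fun c : ℝ => smoothSupp d p (c * ε) x)
      (nhdsWithin 1 (Set.Iio 1)) (nhds (smoothSupp d p ε x)) := by
  have hd' : ∀ i, 0 ≤ d i := fun i => (hd i).le
  have hp0 : p ≠ 0 := (zero_lt_one.trans_le hp).ne'
  have bounds : ∀ c : ℝ, 0 < c → c < 1 →
      smoothSupp d p ε x ≤ smoothSupp d p (c * ε) x ∧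
      smoothSupp d p (c * ε) x ≤ (1 - c) * wsupp d x + c * smoothSupp d p ε x := fun c hc0 hc1 =>
    ⟨smoothSupp_antitone hd' hp0 (mul_nonneg hc0.le hε.1) (mul_le_of_le_one_left hε.1 hc1.le),
      smoothSupp_mul_le hd' hp0 hε.1 hc0.le hc1.le⟩
  refine ⟨bounds, ?_⟩
  have hupper : Filter.Tendsto (fun c : ℝ => (1 - c) * wsupp d x + c * smoothSupp d p ε x)
      (nhdsWithin 1 (Set.Iio 1)) (nhds (smoothSupp d p ε x)) :=
    ((Continuous.tendsto' (by fun_prop) 1 _ (by simp)).mono_left nhdsWithin_le_nhds)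
  have hnear : Set.Ioo (0:ℝ) 1 ∈ nhdsWithin (1:ℝ) (Set.Iio 1) :=
    Ioo_mem_nhdsLT (by norm_num)
  refine tendsto_of_tendsto_of_tendsto_of_le_of_le' tendsto_const_nhds hupper ?_ ?_
  · filter_upwards [hnear] with c hc using (bounds c hc.1 hc.2).1
  · filter_upwards [hnear] with c hc using (bounds c hc.1 hc.2).2

/-- Continuity of the smooth support in `ε`, commutative finite-dimensional case. -/
theorem smooth_support_continuity {n : ℕ} (hn : 0 < n)
    (d : Fin n → ℝ) (hd : ∀ i, 0 < d i)
    (x : Fin n → ℂ) (hx : x ≠ 0) (p ε : ℝ) (hp : 1 ≤ p) (hε : ε ∈ Set.Icc (0:ℝ) 1) :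
    (∀ c : ℝ, 0 < c → c < 1 →
      smoothSupp d p ε x ≤ smoothSupp d p (c * ε) x ∧
      smoothSupp d p (c * ε) x ≤ (1 - c) * wsupp d x + c * smoothSupp d p ε x) ∧
    Filter.Tendsto (fun c : ℝ => smoothSupp d p (c * ε) x)
      (nhdsWithin 1 (Set.Iio 1)) (nhds (smoothSupp d p ε x)) :=
  smooth_support_continuity_general d hd x p ε hp hε
end

section
/- Weyl-type inequality for singular values: for any two matrices A, B ∈ Matrix (Fin n) (Fin n) ℂ and every index i, |σ(A) i − σ(B) i| ≤ ‖A − B‖, where σ(A) denotes the decreasing sequence of singular values of A and ‖·‖ is the ℓ² → ℓ² operator norm. -/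
/-!
Let `σᵢ` be the `(i+1)`-st largest singular value. The span of the eigenvectors of `AᴴA` for its
`i + 1` largest eigenvalues and the span of the eigenvectors of `BᴴB` for its `n - i` smallest ones
have dimensions adding up to `n + 1`, so they share a vector `x ≠ 0`. Expanding
`‖A x‖² = ⟪x, AᴴA x⟫` in the eigenbasis gives `‖A x‖ ≥ σᵢ(A) ‖x‖` and `‖B x‖ ≤ σᵢ(B) ‖x‖`, hence
`σᵢ(A) ‖x‖ ≤ ‖B x‖ + ‖(A - B) x‖ ≤ (σᵢ(B) + ‖A - B‖) ‖x‖`. Exchanging `A` and `B` gives the rest.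
-/

open Finset

/-- The `ℓ² → ℓ²` operator norm of a matrix, via its action on Euclidean space. -/
noncomputable def matOpNorm {n : ℕ} (A : Matrix (Fin n) (Fin n) ℂ) : ℝ :=
  ‖Matrix.toEuclideanCLM (𝕜 := ℂ) A‖

/-- The singular values of `A` (square roots of the eigenvalues of `Aᴴ * A`),
arranged in decreasing order. -/
noncomputable def singVals {n : ℕ} (A : Matrix (Fin n) (Fin n) ℂ) : Fin n → ℝ := fun i =>
  Real.sqrt ((Matrix.isHermitian_conjTranspose_mul_self A).eigenvalues
    (Tuple.sort (Matrix.isHermitian_conjTranspose_mul_self A).eigenvalues i.rev))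

open Module

lemma Submodule.exists_ne_zero_mem_inf_of_finrank_lt_add {K V : Type*} [DivisionRing K]
    [AddCommGroup V] [Module K V] [FiniteDimensional K V] {p q : Submodule K V}
    (h : finrank K V < finrank K p + finrank K q) : ∃ x ∈ p ⊓ q, x ≠ 0 :=
  (Submodule.ne_bot_iff _).mp fun hpq =>
    (finrank_add_finrank_le_of_disjoint (disjoint_iff.mpr hpq)).not_gt h

lemma LinearIndependent.finrank_span_image_finset {K V ι : Type*} [DivisionRing K]
    [AddCommGroup V] [Module K V] {v : ι → V} (hv : LinearIndependent K v) (s : Finset ι) :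
    finrank K (Submodule.span K (v '' s)) = #s := by
  rw [Set.image_eq_range]
  exact (finrank_span_eq_card (hv.comp _ Subtype.val_injective)).trans (by simp)

lemma OrthonormalBasis.repr_eq_zero_of_mem_span_image {𝕜 ι E : Type*} [RCLike 𝕜] [Fintype ι]
    [NormedAddCommGroup E] [InnerProductSpace 𝕜 E] (b : OrthonormalBasis ι 𝕜 E) {s : Set ι}
    {x : E} (hx : x ∈ Submodule.span 𝕜 (b '' s)) {j : ι} (hj : j ∉ s) : b.repr x j = 0 := by
  rw [← b.coe_toBasis, Module.Basis.mem_span_image] at hx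
  rw [← b.coe_toBasis_repr_apply]
  exact Finsupp.notMem_support_iff.mp fun h => hj (hx h)

namespace Matrix

variable {𝕜 ι : Type*} [RCLike 𝕜] [Fintype ι] [DecidableEq ι]

lemma IsHermitian.toEuclideanCLM_eigenvectorBasis {H : Matrix ι ι 𝕜} (hH : H.IsHermitian)
    (j : ι) :
    toEuclideanCLM (𝕜 := 𝕜) H (hH.eigenvectorBasis j) =
      hH.eigenvalues j • hH.eigenvectorBasis j :=
  WithLp.ofLp_injective 2 <| by
    rw [ofLp_toEuclideanCLM, hH.mulVec_eigenvectorBasis, WithLp.ofLp_smul]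

lemma IsHermitian.eigenvectorBasis_repr_toEuclideanCLM {H : Matrix ι ι 𝕜} (hH : H.IsHermitian)
    (x : EuclideanSpace 𝕜 ι) (j : ι) :
    hH.eigenvectorBasis.repr (toEuclideanCLM (𝕜 := 𝕜) H x) j =
      hH.eigenvalues j * hH.eigenvectorBasis.repr x j := by
  rw [OrthonormalBasis.repr_apply_apply, OrthonormalBasis.repr_apply_apply,
    ← (IsSelfAdjoint.map hH.isSelfAdjoint toEuclideanCLM).adjoint_eq,
    ContinuousLinearMap.adjoint_inner_right, hH.toEuclideanCLM_eigenvectorBasis,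
    RCLike.real_smul_eq_coe_smul (K := 𝕜), inner_smul_left, RCLike.conj_ofReal]

lemma norm_toEuclideanCLM_sq (A : Matrix ι ι 𝕜) (x : EuclideanSpace 𝕜 ι) :
    ‖toEuclideanCLM (𝕜 := 𝕜) A x‖ ^ 2 =
      ∑ j, (isHermitian_conjTranspose_mul_self A).eigenvalues j *
        ‖(isHermitian_conjTranspose_mul_self A).eigenvectorBasis.repr x j‖ ^ 2 := by
  set hH := isHermitian_conjTranspose_mul_self A
  have h : (‖toEuclideanCLM (𝕜 := 𝕜) A x‖ ^ 2 : 𝕜) =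
      inner 𝕜 x (toEuclideanCLM (𝕜 := 𝕜) (Aᴴ * A) x) := by
    rw [map_mul, ← star_eq_conjTranspose, map_star, ContinuousLinearMap.star_eq_adjoint,
      mul_apply_eq_comp, ContinuousLinearMap.adjoint_inner_right, inner_self_eq_norm_sq_to_K]
  rw [← hH.eigenvectorBasis.repr.inner_map_map, PiLp.inner_apply] at h
  simp only [hH.eigenvectorBasis_repr_toEuclideanCLM, RCLike.inner_apply, mul_assoc,
    RCLike.mul_conj] at h
  exact_mod_cast h

lemma mul_norm_sq_le_norm_toEuclideanCLM_sq (A : Matrix ι ι 𝕜) {s : Set ι} {c : ℝ}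
    (hs : ∀ j ∈ s, c ≤ (isHermitian_conjTranspose_mul_self A).eigenvalues j)
    {x : EuclideanSpace 𝕜 ι}
    (hx : x ∈ Submodule.span 𝕜 ((isHermitian_conjTranspose_mul_self A).eigenvectorBasis '' s)) :
    c * ‖x‖ ^ 2 ≤ ‖toEuclideanCLM (𝕜 := 𝕜) A x‖ ^ 2 := by
  rw [norm_toEuclideanCLM_sq, ← LinearIsometryEquiv.norm_map
    (isHermitian_conjTranspose_mul_self A).eigenvectorBasis.repr, EuclideanSpace.norm_sq_eq,
    mul_sum]
  refine sum_le_sum fun j _ => ?_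
  by_cases hj : j ∈ s
  · exact mul_le_mul_of_nonneg_right (hs j hj) (sq_nonneg _)
  · simp [OrthonormalBasis.repr_eq_zero_of_mem_span_image _ hx hj]

lemma norm_toEuclideanCLM_sq_le_mul_norm_sq (A : Matrix ι ι 𝕜) {s : Set ι} {c : ℝ}
    (hs : ∀ j ∈ s, (isHermitian_conjTranspose_mul_self A).eigenvalues j ≤ c)
    {x : EuclideanSpace 𝕜 ι}
    (hx : x ∈ Submodule.span 𝕜 ((isHermitian_conjTranspose_mul_self A).eigenvectorBasis '' s)) :
    ‖toEuclideanCLM (𝕜 := 𝕜) A x‖ ^ 2 ≤ c * ‖x‖ ^ 2 := by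
  rw [norm_toEuclideanCLM_sq, ← LinearIsometryEquiv.norm_map
    (isHermitian_conjTranspose_mul_self A).eigenvectorBasis.repr, EuclideanSpace.norm_sq_eq,
    mul_sum]
  refine sum_le_sum fun j _ => ?_
  by_cases hj : j ∈ s
  · exact mul_le_mul_of_nonneg_right (hs j hj) (sq_nonneg _)
  · simp [OrthonormalBasis.repr_eq_zero_of_mem_span_image _ hx hj]

theorem sqrt_le_sqrt_add_norm_toEuclideanCLM_sub (A B : Matrix ι ι 𝕜) {s t : Finset ι}
    (hst : Fintype.card ι < #s + #t) {c d : ℝ}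
    (hs : ∀ j ∈ s, c ≤ (isHermitian_conjTranspose_mul_self A).eigenvalues j)
    (ht : ∀ j ∈ t, (isHermitian_conjTranspose_mul_self B).eigenvalues j ≤ d) :
    √c ≤ √d + ‖toEuclideanCLM (𝕜 := 𝕜) (A - B)‖ := by
  set bA := (isHermitian_conjTranspose_mul_self A).eigenvectorBasis
  set bB := (isHermitian_conjTranspose_mul_self B).eigenvectorBasis
  obtain ⟨x, ⟨hxA, hxB⟩, hx0⟩ :=
    Submodule.exists_ne_zero_mem_inf_of_finrank_lt_add (K := 𝕜)
      (p := Submodule.span 𝕜 (bA '' s)) (q := Submodule.span 𝕜 (bB '' t)) <| by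
    rwa [finrank_euclideanSpace, bA.orthonormal.linearIndependent.finrank_span_image_finset,
      bB.orthonormal.linearIndependent.finrank_span_image_finset]
  have hAx : √c * ‖x‖ ≤ ‖toEuclideanCLM (𝕜 := 𝕜) A x‖ := by
    have := Real.sqrt_le_sqrt (mul_norm_sq_le_norm_toEuclideanCLM_sq A hs hxA)
    rwa [Real.sqrt_mul' _ (sq_nonneg _), Real.sqrt_sq (norm_nonneg _),
      Real.sqrt_sq (norm_nonneg _)] at this
  have hBx : ‖toEuclideanCLM (𝕜 := 𝕜) B x‖ ≤ √d * ‖x‖ := by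
    have := Real.sqrt_le_sqrt (norm_toEuclideanCLM_sq_le_mul_norm_sq B ht hxB)
    rwa [Real.sqrt_mul' _ (sq_nonneg _), Real.sqrt_sq (norm_nonneg _),
      Real.sqrt_sq (norm_nonneg _)] at this
  refine le_of_mul_le_mul_right ?_ (norm_pos_iff.mpr hx0)
  calc √c * ‖x‖ ≤ ‖toEuclideanCLM (𝕜 := 𝕜) A x‖ := hAx
    _ ≤ ‖toEuclideanCLM (𝕜 := 𝕜) B x‖ + ‖toEuclideanCLM (𝕜 := 𝕜) (A - B) x‖ := by
      rw [map_sub, _root_.sub_apply]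
      exact norm_le_norm_add_norm_sub' _ _
    _ ≤ √d * ‖x‖ + ‖toEuclideanCLM (𝕜 := 𝕜) (A - B)‖ * ‖x‖ :=
      add_le_add hBx (ContinuousLinearMap.le_opNorm _ _)
    _ = (√d + ‖toEuclideanCLM (𝕜 := 𝕜) (A - B)‖) * ‖x‖ := by ring

end Matrix

open Matrix in
lemma singVals_le_add_matOpNorm_sub {n : ℕ} (A B : Matrix (Fin n) (Fin n) ℂ) (i : Fin n) :
    singVals A i ≤ singVals B i + matOpNorm (A - B) := by
  -- `singVals A i = √(eA (sort eA i.rev))`, so `Ici i.rev` picks the `i + 1` largest eigenvalues.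
  set eA := (isHermitian_conjTranspose_mul_self A).eigenvalues
  set eB := (isHermitian_conjTranspose_mul_self B).eigenvalues
  refine sqrt_le_sqrt_add_norm_toEuclideanCLM_sub A B
    (s := (Ici i.rev).map (Tuple.sort eA).toEmbedding)
    (t := (Iic i.rev).map (Tuple.sort eB).toEmbedding) ?_ ?_ ?_
  · simp only [card_map, Fin.card_Ici, Fin.card_Iic, Fintype.card_fin]
    omega
  · exact forall_mem_map.mpr fun m hm => Tuple.monotone_sort eA (mem_Ici.mp hm)
  · exact forall_mem_map.mpr fun m hm => Tuple.monotone_sort eB (mem_Iic.mp hm)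

theorem singular_value_weyl_general {n : ℕ}
    (A B : Matrix (Fin n) (Fin n) ℂ) (i : Fin n) :
    |singVals A i - singVals B i| ≤ matOpNorm (A - B) := by
  have hBA : matOpNorm (B - A) = matOpNorm (A - B) := by
    simp only [matOpNorm, map_sub, norm_sub_rev]
  rw [abs_sub_le_iff]
  constructor <;>
    linarith [singVals_le_add_matOpNorm_sub A B i, singVals_le_add_matOpNorm_sub B A i]

/-- Weyl-type inequality for singular values. -/
theorem singular_value_weyl {n : ℕ} (hn : 0 < n)
    (A B : Matrix (Fin n) (Fin n) ℂ) (i : Fin n) :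
    |singVals A i - singVals B i| ≤ matOpNorm (A - B) :=
  singular_value_weyl_general A B i
end

section
/- Surjectivity of the Wigderson-Wigderson functional F_{p,q} onto ℝ_{>0}: let p, q be reals with 1 < p < q < ∞ and 1/p + 1/q < 1. Then for every real c > 0 there exists a nonzero Schwartz function f ∈ 𝓢(ℝ) such that ‖f‖_q * ‖𝓕f‖_q = c * ‖f‖_p * ‖𝓕f‖_p. -/
/-!
Everything is computed on Gaussians `g_b(x) = exp(-π b x²)`, whose `L^r` norms and Fourier
transforms are explicit. A chirped Gaussian with `Re b = 1` and `‖b‖ = R` has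
`‖g_b‖_r ‖𝓕 g_b‖_r = r^(-1/r) R^(1/r - 1/2)`, so the ratio of the `q`- and `p`-products is
`κ R^(1/q - 1/p)` with `κ = q^(-1/q) / p^(-1/p)`, and every `c ≤ κ` is attained by solving for `R`.

For `c ≥ κ`, add a spike: `f_a = g_1 + a^s g_a`, whose transform is `g_1 + a^(s - 1/2) g_(1/a)`.
With `s = min (1/(2p)) (1/2 - 1/(2p))`, Minkowski keeps both `p`-norms bounded for `a ≥ 1`, while
`‖f_a‖_q ≥ a^(s - 1/(2q)) q^(-1/(2q))` grows because `s > 1/(2q)`; for the second term of the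
minimum this is exactly `1/p + 1/q < 1`. At `a = 1` the ratio is `κ`, and the products depend
continuously on `a` by dominated convergence, so the intermediate value theorem gives `c`.
-/

open MeasureTheory SchwartzMap

/-- The `L^r` norm of `f : ℝ → ℂ` with respect to Lebesgue measure. -/
noncomputable def Lnorm (r : ℝ) (f : ℝ → ℂ) : ℝ :=
  (∫ x : ℝ, ‖f x‖ ^ r) ^ (1 / r)

/-- The sup norm `‖f‖_∞ = sup_x |f x|`. -/
noncomputable def Lsup (f : ℝ → ℂ) : ℝ := ⨆ x : ℝ, ‖f x‖

/-- The Fourier transform `𝓕 f (ξ) = ∫ f x · e^{-2πi x ξ} dx`. -/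
noncomputable def FT (f : ℝ → ℂ) : ℝ → ℂ := fun ξ =>
  ∫ x : ℝ, f x * Complex.exp (-2 * Real.pi * Complex.I * x * ξ)

open Real Complex Polynomial FourierTransform

noncomputable def gauss (b : ℂ) (x : ℝ) : ℂ := cexp (-(π : ℂ) * b * (x : ℂ) ^ 2)

lemma norm_gauss (b : ℂ) (x : ℝ) : ‖gauss b x‖ = rexp (-(π * b.re * x ^ 2)) := by
  rw [gauss, Complex.norm_exp]
  congr 1
  simp [Complex.mul_re, ← Complex.ofReal_pow]

lemma gauss_ofReal (t x : ℝ) : gauss t x = (rexp (-(π * t * x ^ 2)) : ℂ) := by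
  rw [gauss, Complex.ofReal_exp]
  push_cast
  ring_nf

lemma hasDerivAt_eval_mul_gauss (b : ℂ) (P : ℂ[X]) (x : ℝ) :
    HasDerivAt (fun y : ℝ => P.eval (y : ℂ) * gauss b y)
      ((derivative P - C (2 * π * b) * X * P).eval (x : ℂ) * gauss b x) x := by
  have h := ((P.hasDerivAt (x : ℂ)).mul
    (((hasDerivAt_pow 2 (x : ℂ)).const_mul (-π * b)).cexp)).comp_ofReal
  refine h.congr_deriv ?_
  simp only [gauss, eval_sub, eval_mul, eval_C, eval_X]
  ring

lemma exists_iteratedDeriv_gauss_eq (b : ℂ) (n : ℕ) :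
    ∃ P : ℂ[X], iteratedDeriv n (gauss b) = fun x : ℝ => P.eval (x : ℂ) * gauss b x := by
  induction n with
  | zero => exact ⟨1, by simp⟩
  | succ n ih =>
    obtain ⟨P, hP⟩ := ih
    refine ⟨derivative P - C (2 * π * b) * X * P, ?_⟩
    rw [iteratedDeriv_succ, hP]
    exact funext fun x => (hasDerivAt_eval_mul_gauss b P x).deriv

lemma pow_abs_mul_exp_neg_mul_sq_le {a : ℝ} (ha : 0 < a) (m : ℕ) (x : ℝ) :
    |x| ^ m * rexp (-(a * x ^ 2)) ≤ m.factorial * rexp a / a ^ m := by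
  have habs : |x| ≤ 1 + x ^ 2 := by nlinarith [sq_abs x, abs_nonneg x]
  have hexp := pow_div_factorial_le_exp (a * (1 + x ^ 2)) (by positivity) m
  rw [mul_pow, div_le_iff₀ (by positivity), mul_one_add, Real.exp_add] at hexp
  rw [le_div_iff₀ (by positivity), Real.exp_neg]
  calc |x| ^ m * (rexp (a * x ^ 2))⁻¹ * a ^ m
      ≤ (a ^ m * (1 + x ^ 2) ^ m) * (rexp (a * x ^ 2))⁻¹ := by
        rw [mul_right_comm, mul_comm (a ^ m)]
        gcongr
    _ ≤ (rexp a * rexp (a * x ^ 2) * m.factorial) * (rexp (a * x ^ 2))⁻¹ := by gcongr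
    _ = m.factorial * rexp a := by field_simp

lemma norm_eval_ofReal_le (P : ℂ[X]) (x : ℝ) :
    ‖P.eval (x : ℂ)‖ ≤ ∑ i ∈ Finset.range (P.natDegree + 1), ‖P.coeff i‖ * |x| ^ i := by
  rw [eval_eq_sum_range]
  refine (norm_sum_le _ _).trans (Finset.sum_le_sum fun i _ => ?_)
  rw [norm_mul, norm_pow, Complex.norm_real, Real.norm_eq_abs]

noncomputable def gaussian (b : ℂ) (hb : 0 < b.re) : 𝓢(ℝ, ℂ) where
  toFun := gauss b
  smooth' := (contDiff_const.mul (ofRealCLM.contDiff.pow 2)).cexp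
  decay' := by
    intro k n
    obtain ⟨P, hP⟩ := exists_iteratedDeriv_gauss_eq b n
    have ha : 0 < π * b.re := by positivity
    refine ⟨∑ i ∈ Finset.range (P.natDegree + 1),
      ‖P.coeff i‖ * ((k + i).factorial * rexp (π * b.re) / (π * b.re) ^ (k + i)), fun x => ?_⟩
    rw [norm_iteratedFDeriv_eq_norm_iteratedDeriv, hP, norm_mul, norm_gauss, Real.norm_eq_abs]
    calc |x| ^ k * (‖P.eval (x : ℂ)‖ * rexp (-(π * b.re * x ^ 2)))
        ≤ |x| ^ k * ((∑ i ∈ Finset.range (P.natDegree + 1), ‖P.coeff i‖ * |x| ^ i)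
            * rexp (-(π * b.re * x ^ 2))) := by
          gcongr
          exact norm_eval_ofReal_le P x
      _ = ∑ i ∈ Finset.range (P.natDegree + 1),
            ‖P.coeff i‖ * (|x| ^ (k + i) * rexp (-(π * b.re * x ^ 2))) := by
          rw [Finset.sum_mul, Finset.mul_sum]
          exact Finset.sum_congr rfl fun i _ => by ring
      _ ≤ _ := by
          gcongr with i
          exact pow_abs_mul_exp_neg_mul_sq_le ha _ x

lemma coe_gaussian (b : ℂ) (hb : 0 < b.re) : ⇑(gaussian b hb) = gauss b := rfl

lemma memLp_gauss {b : ℂ} (hb : 0 < b.re) (p : ENNReal) : MemLp (gauss b) p :=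
  SchwartzMap.memLp (gaussian b hb) p volume

lemma FT_eq_fourier (f : ℝ → ℂ) : FT f = 𝓕 f := by
  funext ξ
  rw [Real.fourier_real_eq_integral_exp_smul, FT]
  congr 1
  funext x
  rw [smul_eq_mul, mul_comm]
  push_cast
  ring_nf

lemma FT_coe (f : 𝓢(ℝ, ℂ)) : FT ⇑f = ⇑(𝓕 f : 𝓢(ℝ, ℂ)) := by
  rw [FT_eq_fourier, SchwartzMap.fourier_coe]

lemma FT_gauss {b : ℂ} (hb : 0 < b.re) :
    FT (gauss b) = fun ξ : ℝ => 1 / b ^ (1 / 2 : ℂ) * gauss (1 / b) ξ := by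
  rw [FT_eq_fourier]
  convert fourier_gaussian_pi hb using 3 with ξ <;> simp only [gauss]
  ring_nf

lemma FT_gauss_ofReal {t : ℝ} (ht : 0 < t) :
    FT (gauss t) = fun ξ : ℝ => (t ^ (-(1 / 2) : ℝ) : ℝ) * gauss t⁻¹ ξ := by
  rw [FT_gauss (by simpa using ht)]
  funext ξ
  rw [one_div (t : ℂ), show (1 / 2 : ℂ) = ((1 / 2 : ℝ) : ℂ) by norm_num,
    ← Complex.ofReal_cpow ht.le, Real.rpow_neg ht.le, Complex.ofReal_inv, one_div]

lemma FT_coe_add_smul (f g : 𝓢(ℝ, ℂ)) (k : ℂ) :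
    FT ⇑(f + k • g) = fun ξ => FT f ξ + k * FT g ξ := by
  simp only [FT_coe, FourierAdd.fourier_add, FourierSMul.fourier_smul]
  rfl

lemma Lnorm_const_mul (k : ℂ) (f : ℝ → ℂ) {r : ℝ} (hr : 0 < r) :
    Lnorm r (fun x => k * f x) = ‖k‖ * Lnorm r f := by
  simp only [Lnorm, norm_mul, Real.mul_rpow (norm_nonneg _) (norm_nonneg _), integral_const_mul]
  rw [Real.mul_rpow (by positivity) (integral_nonneg fun x => by positivity),
    ← Real.rpow_mul (norm_nonneg _), mul_one_div_cancel hr.ne', Real.rpow_one]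

lemma integral_exp_neg_pi_mul_sq {t : ℝ} (ht : 0 < t) :
    ∫ x : ℝ, rexp (-(π * t * x ^ 2)) = t ^ (-(1 / 2) : ℝ) := by
  simp_rw [show ∀ x : ℝ, -(π * t * x ^ 2) = -(π * t) * x ^ 2 from fun x => by ring,
    integral_gaussian, div_mul_cancel_left₀ pi_ne_zero, Real.sqrt_eq_rpow,
    Real.rpow_neg ht.le, Real.inv_rpow ht.le]

lemma norm_gauss_rpow (b : ℂ) (r x : ℝ) :
    ‖gauss b x‖ ^ r = rexp (-(π * (b.re * r) * x ^ 2)) := by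
  rw [norm_gauss, ← Real.exp_mul]
  ring_nf

lemma Lnorm_gauss {b : ℂ} (hb : 0 < b.re) {r : ℝ} (hr : 0 < r) :
    Lnorm r (gauss b) = (b.re * r) ^ (-(1 / (2 * r))) := by
  rw [Lnorm]
  simp_rw [norm_gauss_rpow]
  rw [integral_exp_neg_pi_mul_sq (by positivity), ← Real.rpow_mul (by positivity)]
  congr 1
  field_simp

lemma Lnorm_FT_gauss {b : ℂ} (hb : 0 < b.re) {r : ℝ} (hr : 0 < r) :
    Lnorm r (FT (gauss b)) = ‖b‖ ^ (-(1 / 2) : ℝ) * (b.re / ‖b‖ ^ 2 * r) ^ (-(1 / (2 * r))) := by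
  have hb0 : b ≠ 0 := by rintro rfl; simp at hb
  have hre : (1 / b).re = b.re / ‖b‖ ^ 2 := by
    rw [one_div, Complex.inv_re, Complex.normSq_eq_norm_sq]
  rw [FT_gauss hb, Lnorm_const_mul _ _ hr, Lnorm_gauss (by rw [hre]; positivity) hr, hre,
    norm_div, norm_one, show (1 / 2 : ℂ) = ((1 / 2 : ℝ) : ℂ) by norm_num, Complex.norm_cpow_real,
    Real.rpow_neg (norm_nonneg _), one_div (‖b‖ ^ _)]

lemma integrable_norm_rpow_of_memLp {f : ℝ → ℂ} {r : ℝ} (hr : 0 < r)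
    (hf : MemLp f (ENNReal.ofReal r)) : Integrable fun x => ‖f x‖ ^ r := by
  simpa [hr.le] using hf.integrable_norm_rpow (by simpa using hr) ENNReal.ofReal_ne_top

lemma Lnorm_eq_toReal_eLpNorm {f : ℝ → ℂ} {r : ℝ} (hr : 0 < r)
    (hf : MemLp f (ENNReal.ofReal r)) :
    Lnorm r f = (eLpNorm f (ENNReal.ofReal r)).toReal := by
  rw [hf.eLpNorm_eq_integral_rpow_norm (by simpa using hr) ENNReal.ofReal_ne_top,
    ENNReal.toReal_ofReal (by positivity), ENNReal.toReal_ofReal hr.le, Lnorm, one_div]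

lemma Lnorm_add_le {f g : ℝ → ℂ} {r : ℝ} (hr : 1 ≤ r) (hf : MemLp f (ENNReal.ofReal r))
    (hg : MemLp g (ENNReal.ofReal r)) :
    Lnorm r (fun x => f x + g x) ≤ Lnorm r f + Lnorm r g := by
  have hr0 : 0 < r := by linarith
  change Lnorm r (f + g) ≤ _
  rw [Lnorm_eq_toReal_eLpNorm hr0 (hf.add hg), Lnorm_eq_toReal_eLpNorm hr0 hf,
    Lnorm_eq_toReal_eLpNorm hr0 hg, ← ENNReal.toReal_add hf.eLpNorm_ne_top hg.eLpNorm_ne_top]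
  exact ENNReal.toReal_mono (ENNReal.add_ne_top.2 ⟨hf.eLpNorm_ne_top, hg.eLpNorm_ne_top⟩)
    (eLpNorm_add_le hf.1 hg.1 (by simpa using hr))

lemma Lnorm_mono {f g : ℝ → ℂ} {r : ℝ} (hr : 0 < r) (hg : MemLp g (ENNReal.ofReal r))
    (hfg : ∀ x, ‖f x‖ ≤ ‖g x‖) : Lnorm r f ≤ Lnorm r g := by
  refine Real.rpow_le_rpow (integral_nonneg fun x => by positivity) ?_ (by positivity)
  exact integral_mono_of_nonneg (.of_forall fun x => by positivity)
    (integrable_norm_rpow_of_memLp hr hg)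
    (.of_forall fun x => Real.rpow_le_rpow (norm_nonneg _) (hfg x) hr.le)

lemma continuousOn_Lnorm_of_dominated {S : Set ℝ} {F : ℝ → ℝ → ℂ} {g : ℝ → ℂ} {r : ℝ} (hr : 0 < r)
    (hF : ∀ a ∈ S, AEStronglyMeasurable (F a)) (hFx : ∀ x, ContinuousOn (fun a => F a x) S)
    (hg : MemLp g (ENNReal.ofReal r)) (hFg : ∀ a ∈ S, ∀ x, ‖F a x‖ ≤ ‖g x‖) :
    ContinuousOn (fun a => Lnorm r (F a)) S := by
  have hint : ContinuousOn (fun a => ∫ x, ‖F a x‖ ^ r) S :=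
    continuousOn_of_dominated
      (fun a ha => ((hF a ha).norm.aemeasurable.pow_const r).aestronglyMeasurable)
      (fun a ha => .of_forall fun x => by
        rw [Real.norm_of_nonneg (by positivity)]
        exact Real.rpow_le_rpow (norm_nonneg _) (hFg a ha x) hr.le)
      (integrable_norm_rpow_of_memLp hr hg)
      (.of_forall fun x => (hFx x).norm.rpow_const fun _ _ => Or.inr hr.le)
  exact hint.rpow_const fun _ _ => Or.inr (by positivity)

noncomputable def uncertaintyProduct (r : ℝ) (f : ℝ → ℂ) : ℝ := Lnorm r f * Lnorm r (FT f)

lemma uncertaintyProduct_gauss {b : ℂ} (hb : b.re = 1) {r : ℝ} (hr : 0 < r) :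
    uncertaintyProduct r (gauss b) = (r ^ (-(1 / (2 * r)))) ^ 2 * ‖b‖ ^ (1 / r - 1 / 2) := by
  have hb' : 0 < b.re := hb ▸ one_pos
  have hb0 : 0 < ‖b‖ := norm_pos_iff.2 (by rintro rfl; simp at hb)
  rw [uncertaintyProduct, Lnorm_gauss hb' hr, Lnorm_FT_gauss hb' hr, hb, one_mul,
    Real.mul_rpow (by positivity) hr.le, one_div (‖b‖ ^ 2), Real.inv_rpow (by positivity),
    ← Real.rpow_natCast, ← Real.rpow_mul hb0.le, ← Real.rpow_neg hb0.le,
    show 1 / r - 1 / 2 = -(1 / 2) + -((2 : ℕ) * -(1 / (2 * r))) by field_simp; ring,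
    Real.rpow_add hb0]
  ring

lemma exists_re_eq_one_norm_eq {R : ℝ} (hR : 1 ≤ R) : ∃ b : ℂ, b.re = 1 ∧ ‖b‖ = R := by
  refine ⟨1 + √(R ^ 2 - 1) * I, by simp, ?_⟩
  rw [Complex.norm_def, ← Complex.ofReal_one, Complex.normSq_add_mul_I,
    Real.sq_sqrt (by nlinarith), show (1 : ℝ) ^ 2 + (R ^ 2 - 1) = R ^ 2 by ring,
    Real.sqrt_sq (by linarith)]

lemma exists_chirp_uncertaintyProduct_eq {p q c : ℝ} (hp : 0 < p) (hpq : p < q) (hc : 0 < c)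
    (hcpq : c * (p ^ (-(1 / (2 * p)))) ^ 2 ≤ (q ^ (-(1 / (2 * q)))) ^ 2) :
    ∃ f : 𝓢(ℝ, ℂ), f ≠ 0 ∧ uncertaintyProduct q f = c * uncertaintyProduct p f := by
  have hq : 0 < q := hp.trans hpq
  set ρ := c * (p ^ (-(1 / (2 * p)))) ^ 2 / (q ^ (-(1 / (2 * q)))) ^ 2
  have hρ : 0 < ρ := by positivity
  have hρ1 : ρ ≤ 1 := (div_le_one (by positivity)).2 hcpq
  have hd : 1 / q - 1 / p < 0 := sub_neg.2 (one_div_lt_one_div_of_lt hp hpq)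
  obtain ⟨b, hb, hbρ⟩ := exists_re_eq_one_norm_eq
    (Real.one_le_rpow_of_pos_of_le_one_of_nonpos hρ hρ1 (inv_nonpos.2 hd.le))
  have hρb : ‖b‖ ^ (1 / q - 1 / 2) = ρ * ‖b‖ ^ (1 / p - 1 / 2) := by
    rw [show 1 / q - 1 / 2 = (1 / q - 1 / p) + (1 / p - 1 / 2) by ring,
      Real.rpow_add (hbρ ▸ by positivity), hbρ, ← Real.rpow_mul hρ.le, inv_mul_cancel₀ hd.ne,
      Real.rpow_one]
  refine ⟨gaussian b (hb ▸ one_pos), ne_of_apply_ne (· 0) (by simp [coe_gaussian, gauss]), ?_⟩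
  rw [coe_gaussian, uncertaintyProduct_gauss hb hq, uncertaintyProduct_gauss hb hp, hρb]
  simp only [ρ]
  field_simp

noncomputable def twoGauss (μ t : ℝ) (x : ℝ) : ℂ := gauss 1 x + μ * gauss t x

lemma coe_gaussian_add_smul_gaussian (μ : ℝ) {t : ℝ} (ht : 0 < t) :
    ⇑(gaussian 1 one_pos + (μ : ℂ) • gaussian t (by simpa using ht)) = twoGauss μ t := rfl

lemma memLp_twoGauss (μ : ℝ) {t : ℝ} (ht : 0 < t) (p : ENNReal) : MemLp (twoGauss μ t) p :=
  (memLp_gauss (by simp) p).add ((memLp_gauss (by simpa using ht) p).const_mul (μ : ℂ))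

lemma norm_twoGauss {μ : ℝ} (hμ : 0 ≤ μ) (t x : ℝ) :
    ‖twoGauss μ t x‖ = rexp (-(π * x ^ 2)) + μ * rexp (-(π * t * x ^ 2)) := by
  rw [twoGauss, ← Complex.ofReal_one, gauss_ofReal, gauss_ofReal, ← Complex.ofReal_mul,
    ← Complex.ofReal_add, Complex.norm_real, Real.norm_of_nonneg (by positivity), mul_one]

lemma FT_twoGauss (μ : ℝ) {t : ℝ} (ht : 0 < t) :
    FT (twoGauss μ t) = twoGauss (μ * t ^ (-(1 / 2) : ℝ)) t⁻¹ := by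
  rw [← coe_gaussian_add_smul_gaussian μ ht, FT_coe_add_smul, coe_gaussian, coe_gaussian,
    ← Complex.ofReal_one, FT_gauss_ofReal one_pos, FT_gauss_ofReal ht]
  funext ξ
  simp only [twoGauss, Real.one_rpow, inv_one, Complex.ofReal_one, one_mul, Complex.ofReal_mul,
    Complex.ofReal_inv, mul_assoc]

lemma Lnorm_twoGauss_le {μ t r : ℝ} (hr : 1 ≤ r) (hμ : 0 ≤ μ) (ht : 0 < t) :
    Lnorm r (twoGauss μ t) ≤ r ^ (-(1 / (2 * r))) + μ * (t * r) ^ (-(1 / (2 * r))) := by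
  have hr0 : 0 < r := by linarith
  have ht' : 0 < (t : ℂ).re := by simpa using ht
  refine (Lnorm_add_le hr (memLp_gauss (by simp) _) ((memLp_gauss ht' _).const_mul _)).trans_eq ?_
  rw [Lnorm_const_mul _ _ hr0, Lnorm_gauss (by simp) hr0, Lnorm_gauss ht' hr0]
  simp [abs_of_nonneg hμ]

lemma Lnorm_gauss_one_le_Lnorm_twoGauss {μ t r : ℝ} (hr : 0 < r) (hμ : 0 ≤ μ) (ht : 0 < t) :
    r ^ (-(1 / (2 * r))) ≤ Lnorm r (twoGauss μ t) := by
  calc r ^ (-(1 / (2 * r))) = Lnorm r (gauss 1) := by rw [Lnorm_gauss (by simp) hr]; simp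
    _ ≤ _ := Lnorm_mono hr (memLp_twoGauss μ ht _) fun x => by
        rw [norm_twoGauss hμ, ← Complex.ofReal_one, norm_gauss, Complex.ofReal_re, mul_one]
        have := Real.exp_nonneg (-(π * t * x ^ 2))
        nlinarith

lemma mul_Lnorm_gauss_le_Lnorm_twoGauss {μ t r : ℝ} (hr : 0 < r) (hμ : 0 ≤ μ) (ht : 0 < t) :
    μ * (t * r) ^ (-(1 / (2 * r))) ≤ Lnorm r (twoGauss μ t) := by
  have ht' : 0 < (t : ℂ).re := by simpa using ht
  calc μ * (t * r) ^ (-(1 / (2 * r))) = Lnorm r (fun x => (μ : ℂ) * gauss t x) := by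
        rw [Lnorm_const_mul _ _ hr, Lnorm_gauss ht' hr]; simp [abs_of_nonneg hμ]
    _ ≤ _ := Lnorm_mono hr (memLp_twoGauss μ ht _) fun x => by
        rw [norm_twoGauss hμ, norm_mul, norm_gauss, Complex.ofReal_re, Complex.norm_real,
          Real.norm_of_nonneg hμ]
        have := Real.exp_nonneg (-(π * x ^ 2))
        linarith

lemma continuousOn_Lnorm_twoGauss {S : Set ℝ} {μ t : ℝ → ℝ} {M t₀ r : ℝ} (hr : 0 < r)
    (hμ : ContinuousOn μ S) (ht : ContinuousOn t S) (ht₀ : 0 < t₀)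
    (hμM : ∀ a ∈ S, 0 ≤ μ a ∧ μ a ≤ M) (htt₀ : ∀ a ∈ S, t₀ ≤ t a) :
    ContinuousOn (fun a => Lnorm r (twoGauss (μ a) (t a))) S := by
  set m := min 1 t₀
  have hm : 0 < (m : ℂ).re := by simpa [m] using ht₀
  refine continuousOn_Lnorm_of_dominated hr
    (fun a ha => (memLp_twoGauss _ (ht₀.trans_le (htt₀ a ha)) 1).1)
    (fun x => by unfold twoGauss gauss; fun_prop)
    ((memLp_gauss hm _).const_mul ((1 + M : ℝ) : ℂ)) fun a ha x => ?_
  obtain ⟨hμ0, hμM⟩ := hμM a ha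
  have h1 : rexp (-(π * x ^ 2)) ≤ rexp (-(π * m * x ^ 2)) := by
    refine Real.exp_le_exp.2 (neg_le_neg ?_)
    nlinarith [mul_le_mul_of_nonneg_left (min_le_left 1 t₀) (by positivity : 0 ≤ π * x ^ 2)]
  have h2 : rexp (-(π * t a * x ^ 2)) ≤ rexp (-(π * m * x ^ 2)) := by
    gcongr
    exact (min_le_right _ _).trans (htt₀ a ha)
  rw [norm_twoGauss hμ0, norm_mul, norm_gauss, Complex.ofReal_re, Complex.norm_real,
    Real.norm_of_nonneg (by linarith)]
  nlinarith [Real.exp_nonneg (-(π * t a * x ^ 2)), Real.exp_nonneg (-(π * m * x ^ 2))]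

lemma continuousOn_uncertaintyProduct_spike {r s A : ℝ} (hr : 0 < r) (hs : 0 ≤ s) (hA : 1 ≤ A) :
    ContinuousOn (fun a => uncertaintyProduct r (twoGauss (a ^ s) a)) (Set.Icc 1 A) := by
  have hpos : ∀ a ∈ Set.Icc (1 : ℝ) A, 0 < a := fun a ha => one_pos.trans_le ha.1
  have hpow : ∀ e : ℝ, ContinuousOn (fun a : ℝ => a ^ e) (Set.Icc 1 A) := fun e =>
    continuousOn_id.rpow_const fun a ha => Or.inl (hpos a ha).ne'
  have hweight : ∀ a ∈ Set.Icc (1 : ℝ) A, 0 ≤ a ^ s ∧ a ^ s ≤ A ^ s := fun a ha =>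
    ⟨Real.rpow_nonneg (hpos a ha).le s, Real.rpow_le_rpow (hpos a ha).le ha.2 hs⟩
  have hFT : ContinuousOn (fun a => Lnorm r (twoGauss (a ^ s * a ^ (-(1 / 2) : ℝ)) a⁻¹))
      (Set.Icc 1 A) := by
    refine continuousOn_Lnorm_twoGauss (M := A ^ s) hr ((hpow s).mul (hpow _))
      (continuousOn_id.inv₀ fun a ha => (hpos a ha).ne') (inv_pos.2 (one_pos.trans_le hA))
      (fun a ha => ⟨?_, ?_⟩) fun a ha => inv_anti₀ (hpos a ha) ha.2
    · exact mul_nonneg (hweight a ha).1 (Real.rpow_nonneg (hpos a ha).le _)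
    · exact (mul_le_of_le_one_right (hweight a ha).1
        (Real.rpow_le_one_of_one_le_of_nonpos ha.1 (by norm_num))).trans (hweight a ha).2
  exact (continuousOn_Lnorm_twoGauss hr (hpow s) continuousOn_id one_pos hweight
    fun a ha => ha.1).mul (hFT.congr fun a ha => by rw [FT_twoGauss _ (hpos a ha)])

lemma uncertaintyProduct_spike_one {r : ℝ} (hr : 0 < r) (s : ℝ) :
    uncertaintyProduct r (twoGauss ((1 : ℝ) ^ s) 1) = (2 * r ^ (-(1 / (2 * r)))) ^ 2 := by
  have htwo : twoGauss 1 1 = fun x => (2 : ℂ) * gauss 1 x := by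
    funext x; rw [twoGauss]; push_cast; ring
  rw [uncertaintyProduct, FT_twoGauss _ one_pos]
  simp only [Real.one_rpow, inv_one, one_mul, htwo, Lnorm_const_mul _ _ hr,
    Lnorm_gauss (by simp : (0 : ℝ) < (1 : ℂ).re) hr]
  simp only [Complex.norm_ofNat, one_re, one_mul]
  ring

lemma uncertaintyProduct_spike_le {r s a : ℝ} (hr : 1 ≤ r) (hs₁ : s ≤ 1 / (2 * r))
    (hs₂ : s ≤ 1 / 2 - 1 / (2 * r)) (ha : 1 ≤ a) :
    uncertaintyProduct r (twoGauss (a ^ s) a) ≤ (2 * r ^ (-(1 / (2 * r)))) ^ 2 := by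
  have hr0 : 0 < r := by linarith
  have ha0 : 0 < a := by linarith
  set e := -(1 / (2 * r))
  have hre : 0 < r ^ e := by positivity
  have h₁ : Lnorm r (twoGauss (a ^ s) a) ≤ 2 * r ^ e := by
    refine (Lnorm_twoGauss_le hr (by positivity) ha0).trans ?_
    rw [Real.mul_rpow ha0.le hr0.le, ← mul_assoc, ← Real.rpow_add ha0]
    have := Real.rpow_le_one_of_one_le_of_nonpos ha (show s + e ≤ 0 by simp only [e]; linarith)
    nlinarith
  have h₂ : Lnorm r (FT (twoGauss (a ^ s) a)) ≤ 2 * r ^ e := by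
    rw [FT_twoGauss _ ha0]
    refine (Lnorm_twoGauss_le hr (by positivity) (inv_pos.2 ha0)).trans ?_
    rw [Real.mul_rpow (inv_pos.2 ha0).le hr0.le, Real.inv_rpow ha0.le, ← Real.rpow_neg ha0.le,
      ← Real.rpow_add ha0, ← mul_assoc, ← Real.rpow_add ha0]
    have := Real.rpow_le_one_of_one_le_of_nonpos ha
      (show s + -(1 / 2) + -e ≤ 0 by simp only [e]; linarith)
    nlinarith
  rw [uncertaintyProduct, sq]
  exact mul_le_mul h₁ h₂ (by rw [Lnorm]; positivity) (by positivity)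

lemma le_uncertaintyProduct_spike {r s a : ℝ} (hr : 0 < r) (ha : 0 < a) :
    a ^ (s - 1 / (2 * r)) * (r ^ (-(1 / (2 * r)))) ^ 2
      ≤ uncertaintyProduct r (twoGauss (a ^ s) a) := by
  have h₁ := mul_Lnorm_gauss_le_Lnorm_twoGauss hr (Real.rpow_nonneg ha.le s) ha
  have h₂ := Lnorm_gauss_one_le_Lnorm_twoGauss hr
    (by positivity : 0 ≤ a ^ s * a ^ (-(1 / 2) : ℝ)) (inv_pos.2 ha)
  rw [Real.mul_rpow ha.le hr.le, ← mul_assoc, ← Real.rpow_add ha] at h₁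
  rw [uncertaintyProduct, FT_twoGauss _ ha, sq, ← mul_assoc, sub_eq_add_neg]
  exact mul_le_mul h₁ h₂ (by positivity) (by rw [Lnorm]; positivity)

lemma exists_uncertaintyProduct_spike_eq {p q c : ℝ} (hp : 1 < p) (hpq : p < q)
    (hsum : 1 / p + 1 / q < 1)
    (hcpq : (q ^ (-(1 / (2 * q)))) ^ 2 ≤ c * (p ^ (-(1 / (2 * p)))) ^ 2) :
    ∃ s a : ℝ, 0 < a ∧ uncertaintyProduct q (twoGauss (a ^ s) a)
      = c * uncertaintyProduct p (twoGauss (a ^ s) a) := by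
  have hp0 : 0 < p := by linarith
  have hq0 : 0 < q := by linarith
  set s := min (1 / (2 * p)) (1 / 2 - 1 / (2 * p))
  have hs : 0 ≤ s := le_min (by positivity) (by
    have : 1 / (2 * p) < 1 / 2 := by rw [div_lt_div_iff₀ (by positivity) two_pos]; linarith
    linarith)
  have hε : 0 < s - 1 / (2 * q) := by
    have h₁ : 1 / (2 * q) < 1 / (2 * p) := one_div_lt_one_div_of_lt (by positivity) (by linarith)
    have h₂ : 1 / (2 * q) < 1 / 2 - 1 / (2 * p) := by
      rw [show 1 / (2 * q) = (1 / q) / 2 by ring, show 1 / (2 * p) = (1 / p) / 2 by ring]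
      linarith
    exact sub_pos.2 (lt_min h₁ h₂)
  set Φ := fun a => uncertaintyProduct q (twoGauss (a ^ s) a)
    - c * uncertaintyProduct p (twoGauss (a ^ s) a)
  have hΦ₁ : Φ 1 ≤ 0 := by
    simp only [Φ, uncertaintyProduct_spike_one hq0, uncertaintyProduct_spike_one hp0]
    linarith
  have hc : 0 ≤ c := nonneg_of_mul_nonneg_left (hcpq.trans_lt' (by positivity)).le
    (by positivity)
  obtain ⟨A, hA, hA1⟩ : ∃ A, c * (2 * p ^ (-(1 / (2 * p)))) ^ 2
      ≤ A ^ (s - 1 / (2 * q)) * (q ^ (-(1 / (2 * q)))) ^ 2 ∧ 1 ≤ A :=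
    ((((tendsto_rpow_atTop hε).atTop_mul_const (by positivity)).eventually_ge_atTop _).and
      (Filter.eventually_ge_atTop 1)).exists
  have hΦA : 0 ≤ Φ A := by
    have h₁ := le_uncertaintyProduct_spike (s := s) hq0 (one_pos.trans_le hA1)
    have h₂ := uncertaintyProduct_spike_le hp.le (min_le_left _ _) (min_le_right _ _) hA1
    simp only [Φ]
    nlinarith [mul_le_mul_of_nonneg_left h₂ hc]
  obtain ⟨a, ha, hΦa⟩ := intermediate_value_Icc hA1
    ((continuousOn_uncertaintyProduct_spike hq0 hs hA1).sub
      (continuousOn_const.mul (continuousOn_uncertaintyProduct_spike hp0 hs hA1))) ⟨hΦ₁, hΦA⟩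
  exact ⟨s, a, one_pos.trans_le ha.1, sub_eq_zero.1 hΦa⟩

lemma exists_spike_uncertaintyProduct_eq {p q c : ℝ} (hp : 1 < p) (hpq : p < q)
    (hsum : 1 / p + 1 / q < 1)
    (hcpq : (q ^ (-(1 / (2 * q)))) ^ 2 ≤ c * (p ^ (-(1 / (2 * p)))) ^ 2) :
    ∃ f : 𝓢(ℝ, ℂ), f ≠ 0 ∧ uncertaintyProduct q f = c * uncertaintyProduct p f := by
  obtain ⟨s, a, ha, hac⟩ := exists_uncertaintyProduct_spike_eq hp hpq hsum hcpq
  have hcoe := coe_gaussian_add_smul_gaussian (a ^ s) ha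
  refine ⟨_, ne_of_apply_ne (fun f : 𝓢(ℝ, ℂ) => ‖f 0‖) ?_, hcoe ▸ hac⟩
  simp only [hcoe, norm_twoGauss (Real.rpow_nonneg ha.le s), zero_apply, norm_zero]
  norm_num
  positivity

/-- Surjectivity of the Wigderson-Wigderson functional `F_{p,q}` onto `ℝ_{>0}`
when `1 < p < q < ∞` and `1/p + 1/q < 1`. -/
theorem WW_functional_surjective (p q : ℝ) (hp : 1 < p) (hpq : p < q)
    (hsum : 1 / p + 1 / q < 1) (c : ℝ) (hc : 0 < c) :
    ∃ f : SchwartzMap ℝ ℂ, f ≠ 0 ∧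
      Lnorm q ⇑f * Lnorm q (FT ⇑f) = c * (Lnorm p ⇑f * Lnorm p (FT ⇑f)) := by
  rcases le_total (c * (p ^ (-(1 / (2 * p)))) ^ 2) ((q ^ (-(1 / (2 * q)))) ^ 2) with h | h
  · exact exists_chirp_uncertaintyProduct_eq (by linarith) hpq hc h
  · exact exists_spike_uncertaintyProduct_eq hp hpq hsum h
end

section
/- Two-sided bound for the L^r norms of the family g_c: for c > 0 let g_c(x) = c^(−1/2) exp(−π x²/c²) + c^(1/2) exp(−π c² x²). Then for every real 1 < r < ∞, (c^(1/r − 1/2) + c^(1/2 − 1/r)) / (2 r^(1/(2r))) ≤ ‖g_c‖_r ≤ (c^(1/r − 1/2) + c^(1/2 − 1/r)) / r^(1/(2r)). -/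
open MeasureTheory SchwartzMap

/-- The self-dual Gaussian family
`g_c(x) = c^(-1/2) exp(-π x²/c²) + c^(1/2) exp(-π c² x²)`. -/
noncomputable def gfam (c : ℝ) : ℝ → ℂ := fun x =>
  ((c ^ (-(1 / 2) : ℝ) * Real.exp (-Real.pi * x ^ 2 / c ^ 2)
    + c ^ ((1 / 2) : ℝ) * Real.exp (-Real.pi * c ^ 2 * x ^ 2) : ℝ) : ℂ)

/-! `g_c` is the sum of two nonnegative Gaussians, of widths `c` and `c⁻¹`, whose `L^r` norms are
`c^(1/r - 1/2) / r^(1/(2r))` and `c^(1/2 - 1/r) / r^(1/(2r))` by the Gaussian integral. Minkowski's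
inequality bounds `‖g_c‖_r` by their sum; since both summands are nonnegative, `‖g_c‖_r` dominates
each of them, hence also their average. -/

open Real

theorem Lnorm_eq_lpNorm {r : ℝ} {f : ℝ → ℂ} (hr : 0 < r) (hf : AEStronglyMeasurable f) :
    Lnorm r f = lpNorm f (ENNReal.ofReal r) volume := by
  rw [lpNorm_eq_integral_norm_rpow_toReal (by simpa using hr) ENNReal.ofReal_ne_top hf,
    ENNReal.toReal_ofReal hr.le, Lnorm, one_div]

theorem lpNorm_le_lpNorm_of_norm_le {α E F : Type*} [MeasurableSpace α] {μ : Measure α}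
    [NormedAddCommGroup E] [NormedAddCommGroup F] {p : ENNReal} {f : α → E} {g : α → F}
    (hg : MemLp g p μ) (h : ∀ x, ‖f x‖ ≤ ‖g x‖) : lpNorm f p μ ≤ lpNorm g p μ :=
  (lpNorm_mono_real hg.norm h).trans_eq (lpNorm_norm hg.aestronglyMeasurable p)

noncomputable def scaledGaussian (k s : ℝ) : ℝ → ℂ := fun x =>
  ((k * exp (-π * x ^ 2 / s ^ 2) : ℝ) : ℂ)

section scaledGaussian

variable {k s r : ℝ}

theorem norm_scaledGaussian_rpow (x : ℝ) :
    ‖scaledGaussian k s x‖ ^ r = |k| ^ r * exp (-(π * r / s ^ 2) * x ^ 2) := by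
  rw [scaledGaussian, Complex.norm_real, norm_mul, Real.norm_eq_abs, norm_of_nonneg (exp_pos _).le,
    mul_rpow (abs_nonneg k) (exp_pos _).le, ← exp_mul]
  congr 2
  ring

theorem integrable_norm_scaledGaussian_rpow (hs : s ≠ 0) (hr : 0 < r) :
    Integrable (fun x => ‖scaledGaussian k s x‖ ^ r) := by
  simp_rw [norm_scaledGaussian_rpow]
  exact (integrable_exp_neg_mul_sq (by positivity)).const_mul _

theorem memLp_scaledGaussian (hs : s ≠ 0) (hr : 0 < r) :
    MemLp (scaledGaussian k s) (ENNReal.ofReal r) := by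
  refine (integrable_norm_rpow_iff (by unfold scaledGaussian; fun_prop) (by simpa using hr)
    ENNReal.ofReal_ne_top).1 ?_
  rw [ENNReal.toReal_ofReal hr.le]
  exact integrable_norm_scaledGaussian_rpow hs hr

theorem integral_norm_scaledGaussian_rpow (hs : s ≠ 0) (hr : 0 < r) :
    ∫ x, ‖scaledGaussian k s x‖ ^ r = |k| ^ r * (|s| / √r) := by
  simp_rw [norm_scaledGaussian_rpow]
  rw [integral_const_mul, integral_gaussian, ← sqrt_sq_eq_abs s, ← sqrt_div' _ hr.le]
  congr 2
  field_simp

theorem Lnorm_scaledGaussian (hs : s ≠ 0) (hr : 0 < r) :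
    Lnorm r (scaledGaussian k s) = |k| * |s| ^ (1 / r) / r ^ (1 / (2 * r)) := by
  rw [Lnorm, integral_norm_scaledGaussian_rpow hs hr, mul_rpow (by positivity) (by positivity),
    ← rpow_mul (abs_nonneg k), mul_one_div_cancel hr.ne', rpow_one,
    div_rpow (abs_nonneg s) (sqrt_nonneg r), sqrt_eq_rpow, ← rpow_mul hr.le, mul_div_assoc]
  congr 3
  field_simp

theorem norm_scaledGaussian_le_norm_add {k' s' : ℝ} (hk : 0 ≤ k) (hk' : 0 ≤ k') (x : ℝ) :
    ‖scaledGaussian k s x‖ ≤ ‖scaledGaussian k s x + scaledGaussian k' s' x‖ := by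
  simp only [scaledGaussian, ← Complex.ofReal_add, Complex.norm_real]
  rw [norm_of_nonneg (by positivity), norm_of_nonneg (by positivity)]
  exact le_add_of_nonneg_right (by positivity)

end scaledGaussian

theorem gfam_eq_add (c : ℝ) :
    gfam c = scaledGaussian (c ^ (-(1 / 2) : ℝ)) c + scaledGaussian (c ^ ((1 / 2) : ℝ)) c⁻¹ := by
  ext1 x
  simp only [gfam, scaledGaussian, Pi.add_apply, ← Complex.ofReal_add]
  congr 4
  field_simp

/-- Two-sided bound for the `L^r` norms of the family `g_c`. -/
theorem gfam_Lnorm_bounds (c : ℝ) (hc : 0 < c) (r : ℝ) (hr : 1 < r) :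
    (c ^ (1 / r - 1 / 2) + c ^ (1 / 2 - 1 / r)) / (2 * r ^ (1 / (2 * r))) ≤ Lnorm r (gfam c) ∧
    Lnorm r (gfam c) ≤ (c ^ (1 / r - 1 / 2) + c ^ (1 / 2 - 1 / r)) / r ^ (1 / (2 * r)) := by
  have hr₀ : 0 < r := by linarith
  set p := ENNReal.ofReal r
  set A := scaledGaussian (c ^ (-(1 / 2) : ℝ)) c
  set B := scaledGaussian (c ^ ((1 / 2) : ℝ)) c⁻¹
  have hA : MemLp A p := memLp_scaledGaussian hc.ne' hr₀
  have hB : MemLp B p := memLp_scaledGaussian (inv_ne_zero hc.ne') hr₀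
  have hnormA : lpNorm A p volume = c ^ (1 / r - 1 / 2) / r ^ (1 / (2 * r)) := by
    rw [← Lnorm_eq_lpNorm hr₀ hA.1, Lnorm_scaledGaussian hc.ne' hr₀, abs_of_pos (by positivity),
      abs_of_pos hc, ← rpow_add hc, neg_add_eq_sub]
  have hnormB : lpNorm B p volume = c ^ (1 / 2 - 1 / r) / r ^ (1 / (2 * r)) := by
    rw [← Lnorm_eq_lpNorm hr₀ hB.1, Lnorm_scaledGaussian (inv_ne_zero hc.ne') hr₀,
      abs_of_pos (by positivity), abs_of_pos (by positivity), inv_rpow hc.le, ← rpow_neg hc.le,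
      ← rpow_add hc, ← sub_eq_add_neg]
  have hAB : MemLp (A + B) p := hA.add hB
  have hlowA : lpNorm A p volume ≤ lpNorm (A + B) p volume :=
    lpNorm_le_lpNorm_of_norm_le hAB
      (norm_scaledGaussian_le_norm_add (by positivity) (by positivity))
  have hlowB : lpNorm B p volume ≤ lpNorm (A + B) p volume := by
    rw [add_comm]
    exact lpNorm_le_lpNorm_of_norm_le (hB.add hA)
      (norm_scaledGaussian_le_norm_add (by positivity) (by positivity))
  have hup : lpNorm (A + B) p volume ≤ lpNorm A p volume + lpNorm B p volume :=
    lpNorm_add_le hA (ENNReal.one_le_ofReal.2 hr.le)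
  rw [gfam_eq_add, Lnorm_eq_lpNorm hr₀ hAB.1]
  constructor
  · rw [div_mul_eq_div_div_swap, add_div, ← hnormA, ← hnormB]
    linarith
  · rwa [add_div, ← hnormA, ← hnormB]
end
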